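/- arXiv:2407.02051 — 11 statements merged into one kernel-verified Lean document; each statement's English description precedes it below -/
import Mathlib

section
/- Let L be a bounded lattice, ϱ ∈ L∖{0,1}, U* a uninorm on [0,ϱ] with neutral element e, and q ∈ (0,e) ∪ I_e^ϱ. Assume that x ∨ y = 1 for all x, y ∈ I_{e,ϱ} with x ≠ y, that x ∨ q = 1 for all x ∈ I_{e,ϱ} with x ∥ q, and that U* ∈ U_b. Then the function U_q given by formula (1) is a uninorm on L with neutral element e if and only if x ∥ y for all x ∈ I_{e,ϱ} with x ∦ q and all y ∈ I_e^ϱ. -/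
attribute [local instance] Classical.propDecidable

variable {L : Type*}

/-- `a` and `b` are incomparable. -/
def Incomp [Lattice L] (a b : L) : Prop := ¬ a ≤ b ∧ ¬ b ≤ a

/-- `U` is a uninorm on the subset `S` of the bounded lattice `L` with neutral element `e`:
it maps `S × S` into `S`, is commutative, associative, increasing in each variable on `S`,
and has `e ∈ S` as neutral element. -/
def IsUninormOn [Lattice L] [BoundedOrder L] (U : L → L → L) (S : Set L) (e : L) : Prop :=
  e ∈ S ∧
  (∀ x ∈ S, ∀ y ∈ S, U x y ∈ S) ∧
  (∀ x ∈ S, ∀ y ∈ S, U x y = U y x) ∧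
  (∀ x ∈ S, ∀ y ∈ S, ∀ z ∈ S, U (U x y) z = U x (U y z)) ∧
  (∀ x ∈ S, ∀ y ∈ S, ∀ z ∈ S, x ≤ y → U x z ≤ U y z ∧ U z x ≤ U z y) ∧
  (∀ x ∈ S, U e x = x ∧ U x e = x)

/-- Formula (1): the function `U_q` built from a uninorm `Ustar` on `[⊥, ϱ]` with neutral
element `e` and an element `q ∈ L`. Here `[⊥, ϱ] = {x | x ≤ ϱ}`, `[⊥, e] = {x | x ≤ e}`,
`I_{e,ϱ} = {x | x ∥ e ∧ x ∥ ϱ}`. -/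
noncomputable def Uq [Lattice L] [BoundedOrder L] (Ustar : L → L → L) (ϱ e q : L)
    (x y : L) : L :=
  if x ≤ ϱ ∧ y ≤ ϱ then Ustar x y
  else if ¬ x ≤ ϱ ∧ y ≤ e then x
  else if x ≤ e ∧ ¬ y ≤ ϱ then y
  else if (Incomp x e ∧ Incomp x ϱ) ∧ (Incomp y e ∧ Incomp y ϱ) then x ⊔ y ⊔ q
  else ⊤

theorem statement0 [Lattice L] [BoundedOrder L]
    (ϱ e q : L) (Ustar : L → L → L)
    (hϱ0 : ϱ ≠ ⊥) (hϱ1 : ϱ ≠ ⊤)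
    (hU : IsUninormOn Ustar {x : L | x ≤ ϱ} e)
    (hq : (⊥ < q ∧ q < e) ∨ (Incomp q e ∧ ¬ Incomp q ϱ))
    (hjoin : ∀ x y : L, Incomp x e → Incomp x ϱ → Incomp y e → Incomp y ϱ →
      x ≠ y → x ⊔ y = ⊤)
    (hjq : ∀ x : L, Incomp x e → Incomp x ϱ → Incomp x q → x ⊔ q = ⊤)
    (hb : ∀ x ≤ ϱ, ∀ y ≤ ϱ, Ustar x y ≤ e → x ≤ e ∧ y ≤ e) :
    IsUninormOn (Uq Ustar ϱ e q) Set.univ e ↔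
      ∀ x y : L, Incomp x e → Incomp x ϱ → ¬ Incomp x q →
        Incomp y e → ¬ Incomp y ϱ → Incomp x y := by
  obtain ⟨heS, hclS, hcommS, hassocS, hmonoS, hneutS⟩ := hU
  have heϱ : e ≤ ϱ := heS
  set U := Uq Ustar ϱ e q with hUdef
  have hcl : ∀ {a b : L}, a ≤ ϱ → b ≤ ϱ → Ustar a b ≤ ϱ := fun ha hb' => hclS _ ha _ hb'
  have hcomm : ∀ {a b : L}, a ≤ ϱ → b ≤ ϱ → Ustar a b = Ustar b a := fun ha hb' => hcommS _ ha _ hb'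
  have hneut : ∀ {a : L}, a ≤ ϱ → Ustar e a = a ∧ Ustar a e = a := fun ha => hneutS _ ha
  have hmono' : ∀ {a b c : L}, a ≤ ϱ → b ≤ ϱ → c ≤ ϱ → a ≤ b →
      Ustar a c ≤ Ustar b c ∧ Ustar c a ≤ Ustar c b :=
    fun ha hb' hc' hab => hmonoS _ ha _ hb' _ hc' hab
  have hϱtop : ¬ (⊤ : L) ≤ ϱ := fun h => hϱ1 (top_le_iff.mp h)
  have hqϱ : q ≤ ϱ := by
    rcases hq with ⟨_, h2⟩ | ⟨hqe, hqϱ'⟩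
    · exact h2.le.trans heϱ
    · by_contra hn
      have hϱq : ϱ ≤ q := by
        by_contra h2
        exact hqϱ' ⟨hn, h2⟩
      exact hqe.2 (heϱ.trans hϱq)
  have hqle : ∀ {u : L}, Incomp u e → Incomp u ϱ → ¬ Incomp u q → q ≤ u := by
    intro u hue huϱ huq
    by_contra hn
    have huq' : u ≤ q := by
      by_contra h
      exact huq ⟨h, hn⟩
    exact huϱ.1 (huq'.trans hqϱ)
  -- evaluation lemmas
  have EPP : ∀ {a b : L}, a ≤ ϱ → b ≤ ϱ → U a b = Ustar a b := by
    intro a b ha hb'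
    rw [hUdef]
    unfold Uq
    rw [if_pos ⟨ha, hb'⟩]
  have EWA : ∀ {a b : L}, ¬ a ≤ ϱ → b ≤ e → U a b = a := by
    intro a b ha hb'
    rw [hUdef]
    unfold Uq
    rw [if_neg (fun h => ha h.1), if_pos ⟨ha, hb'⟩]
  have EAW : ∀ {a b : L}, a ≤ e → ¬ b ≤ ϱ → U a b = b := by
    intro a b ha hb'
    rw [hUdef]
    unfold Uq
    rw [if_neg (fun h => hb' h.2), if_neg (fun h => h.1 (ha.trans heϱ)), if_pos ⟨ha, hb'⟩]
  have EFF : ∀ {a b : L}, Incomp a e → Incomp a ϱ → Incomp b e → Incomp b ϱ →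
      U a b = a ⊔ b ⊔ q := by
    intro a b hae haϱ hbe hbϱ
    rw [hUdef]
    unfold Uq
    rw [if_neg (fun h => haϱ.1 h.1), if_neg (fun h => hbe.1 h.2),
      if_neg (fun h => hae.1 h.1), if_pos ⟨⟨hae, haϱ⟩, ⟨hbe, hbϱ⟩⟩]
  have ETOP : ∀ {a b : L}, ¬(a ≤ ϱ ∧ b ≤ ϱ) → ¬(¬ a ≤ ϱ ∧ b ≤ e) → ¬(a ≤ e ∧ ¬ b ≤ ϱ) →
      ¬((Incomp a e ∧ Incomp a ϱ) ∧ (Incomp b e ∧ Incomp b ϱ)) → U a b = ⊤ := by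
    intro a b h1 h2 h3 h4
    rw [hUdef]
    unfold Uq
    rw [if_neg h1, if_neg h2, if_neg h3, if_neg h4]
  have EBW : ∀ {a b : L}, a ≤ ϱ → ¬ a ≤ e → ¬ b ≤ ϱ → U a b = ⊤ :=
    fun ha hae hbϱ => ETOP (fun h => hbϱ h.2) (fun h => h.1 ha) (fun h => hae h.1)
      (fun h => h.1.2.1 ha)
  have EWB : ∀ {a b : L}, ¬ a ≤ ϱ → b ≤ ϱ → ¬ b ≤ e → U a b = ⊤ :=
    fun ha hbϱ hbe => ETOP (fun h => ha h.1) (fun h => hbe h.2) (fun h => ha (h.1.trans heϱ))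
      (fun h => h.2.2.1 hbϱ)
  have EWW : ∀ {a b : L}, ¬ a ≤ ϱ → ¬ b ≤ ϱ →
      ¬((Incomp a e ∧ Incomp a ϱ) ∧ (Incomp b e ∧ Incomp b ϱ)) → U a b = ⊤ :=
    fun ha hbϱ h4 => ETOP (fun h => ha h.1) (fun h => hbϱ (h.2.trans heϱ))
      (fun h => ha (h.1.trans heϱ)) h4
  have EtopR : ∀ a : L, U a ⊤ = ⊤ := by
    intro a
    by_cases ha : a ≤ ϱ
    · by_cases hae : a ≤ e
      · exact EAW hae hϱtop
      · exact EBW ha hae hϱtop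
    · exact EWW ha hϱtop (fun h => h.2.1.2 le_top)
  have EtopL : ∀ b : L, U ⊤ b = ⊤ := by
    intro b
    by_cases hb' : b ≤ ϱ
    · by_cases hbe : b ≤ e
      · exact EWA hϱtop hbe
      · exact EWB hϱtop hb' hbe
    · exact EWW hϱtop hb' (fun h => h.1.1.2 le_top)
  have hFFval : ∀ {a b : L}, Incomp a e → Incomp a ϱ → Incomp b e → Incomp b ϱ →
      a ⊔ b ⊔ q = ⊤ ∨ (a = b ∧ q ≤ a ∧ a ⊔ b ⊔ q = a) := by
    intro a b hae haϱ hbe hbϱ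
    by_cases hab : a = b
    · subst hab
      by_cases haq : Incomp a q
      · left
        rw [sup_idem]
        exact hjq a hae haϱ haq
      · right
        have hqa := hqle hae haϱ haq
        refine ⟨rfl, hqa, ?_⟩
        rw [sup_idem]
        exact sup_eq_left.mpr hqa
    · left
      rw [hjoin a b hae haϱ hbe hbϱ hab]
      simp
  have comm : ∀ a b : L, U a b = U b a := by
    intro a b
    by_cases ha : a ≤ ϱ <;> by_cases hb' : b ≤ ϱ
    · rw [EPP ha hb', EPP hb' ha, hcomm ha hb']
    · by_cases hae : a ≤ e
      · rw [EAW hae hb', EWA hb' hae]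
      · rw [EBW ha hae hb', EWB hb' ha hae]
    · by_cases hbe : b ≤ e
      · rw [EWA ha hbe, EAW hbe ha]
      · rw [EWB ha hb' hbe, EBW hb' hbe ha]
    · by_cases hF : (Incomp a e ∧ Incomp a ϱ) ∧ (Incomp b e ∧ Incomp b ϱ)
      · rw [EFF hF.1.1 hF.1.2 hF.2.1 hF.2.2, EFF hF.2.1 hF.2.2 hF.1.1 hF.1.2,
          sup_comm a b]
      · rw [EWW ha hb' hF, EWW hb' ha (fun h => hF ⟨h.2, h.1⟩)]
  have neut : ∀ a : L, U e a = a ∧ U a e = a := by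
    intro a
    by_cases ha : a ≤ ϱ
    · rw [EPP heϱ ha, EPP ha heϱ]
      exact ⟨(hneut ha).1, (hneut ha).2⟩
    · rw [EAW le_rfl ha, EWA ha le_rfl]
      exact ⟨rfl, rfl⟩
  have assoc : ∀ a b c : L, U (U a b) c = U a (U b c) := by
    have flip : ∀ a b c : L, U (U c b) a = U c (U b a) → U (U a b) c = U a (U b c) := by
      intro a b c h
      calc U (U a b) c = U c (U a b) := comm _ _
        _ = U c (U b a) := by rw [comm a b]
        _ = U (U c b) a := h.symm
        _ = U a (U c b) := comm _ _
        _ = U a (U b c) := by rw [comm c b]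
    intro a b c
    by_cases ha : a ≤ ϱ <;> by_cases hb' : b ≤ ϱ <;> by_cases hc : c ≤ ϱ
    · -- PPP
      rw [EPP ha hb', EPP (hcl ha hb') hc, EPP hb' hc, EPP ha (hcl hb' hc)]
      exact hassocS a ha b hb' c hc
    · -- PPW
      rw [EPP ha hb']
      by_cases habe : a ≤ e ∧ b ≤ e
      · have hse : Ustar a b ≤ e := by
          have h1 := (hmono' ha heϱ hb' habe.1).1
          rw [(hneut hb').1] at h1
          exact h1.trans habe.2
        rw [EAW hse hc, EAW habe.2 hc, EAW habe.1 hc]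
      · have hse : ¬ Ustar a b ≤ e := fun h => habe (hb a ha b hb' h)
        rw [EBW (hcl ha hb') hse hc]
        by_cases hbe : b ≤ e
        · have hae : ¬ a ≤ e := fun h => habe ⟨h, hbe⟩
          rw [EAW hbe hc, EBW ha hae hc]
        · rw [EBW hb' hbe hc, EtopR a]
    · -- PWP
      by_cases hae : a ≤ e <;> by_cases hce : c ≤ e
      · rw [EAW hae hb', EWA hb' hce, EAW hae hb']
      · rw [EAW hae hb', EWB hb' hc hce, EtopR a]
      · rw [EBW ha hae hb', EtopL c, EWA hb' hce, EBW ha hae hb']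
      · rw [EBW ha hae hb', EtopL c, EWB hb' hc hce, EtopR a]
    · -- PWW
      by_cases hae : a ≤ e
      · rw [EAW hae hb']
        by_cases hF : (Incomp b e ∧ Incomp b ϱ) ∧ (Incomp c e ∧ Incomp c ϱ)
        · rw [EFF hF.1.1 hF.1.2 hF.2.1 hF.2.2]
          rcases hFFval hF.1.1 hF.1.2 hF.2.1 hF.2.2 with h | ⟨hbc, hqb, h⟩
          · rw [h, EtopR a]
          · rw [h, EAW hae hb']
        · rw [EWW hb' hc hF, EtopR a]
      · rw [EBW ha hae hb', EtopL c]
        by_cases hF : (Incomp b e ∧ Incomp b ϱ) ∧ (Incomp c e ∧ Incomp c ϱ)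
        · rw [EFF hF.1.1 hF.1.2 hF.2.1 hF.2.2]
          rcases hFFval hF.1.1 hF.1.2 hF.2.1 hF.2.2 with h | ⟨hbc, hqb, h⟩
          · rw [h, EtopR a]
          · rw [h, EBW ha hae hb']
        · rw [EWW hb' hc hF, EtopR a]
    · -- WPP (flip of PPW)
      refine flip a b c ?_
      rw [EPP hc hb']
      by_cases hcbe : c ≤ e ∧ b ≤ e
      · have hse : Ustar c b ≤ e := by
          have h1 := (hmono' hc heϱ hb' hcbe.1).1
          rw [(hneut hb').1] at h1
          exact h1.trans hcbe.2
        rw [EAW hse ha, EAW hcbe.2 ha, EAW hcbe.1 ha]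
      · have hse : ¬ Ustar c b ≤ e := fun h => hcbe (hb c hc b hb' h)
        rw [EBW (hcl hc hb') hse ha]
        by_cases hbe : b ≤ e
        · have hce : ¬ c ≤ e := fun h => hcbe ⟨h, hbe⟩
          rw [EAW hbe ha, EBW hc hce ha]
        · rw [EBW hb' hbe ha, EtopR c]
    · -- WPW
      by_cases hbe : b ≤ e
      · rw [EWA ha hbe, EAW hbe hc]
      · rw [EWB ha hb' hbe, EtopL c, EBW hb' hbe hc, EtopR a]
    · -- WWP (flip of PWW)
      refine flip a b c ?_
      by_cases hce : c ≤ e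
      · rw [EAW hce hb']
        by_cases hF : (Incomp b e ∧ Incomp b ϱ) ∧ (Incomp a e ∧ Incomp a ϱ)
        · rw [EFF hF.1.1 hF.1.2 hF.2.1 hF.2.2]
          rcases hFFval hF.1.1 hF.1.2 hF.2.1 hF.2.2 with h | ⟨hba, hqb, h⟩
          · rw [h, EtopR c]
          · rw [h, EAW hce hb']
        · rw [EWW hb' ha hF, EtopR c]
      · rw [EBW hc hce hb', EtopL a]
        by_cases hF : (Incomp b e ∧ Incomp b ϱ) ∧ (Incomp a e ∧ Incomp a ϱ)
        · rw [EFF hF.1.1 hF.1.2 hF.2.1 hF.2.2]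
          rcases hFFval hF.1.1 hF.1.2 hF.2.1 hF.2.2 with h | ⟨hba, hqb, h⟩
          · rw [h, EtopR c]
          · rw [h, EBW hc hce hb']
        · rw [EWW hb' ha hF, EtopR c]
    · -- WWW
      by_cases hFb : Incomp b e ∧ Incomp b ϱ
      · by_cases hFa : Incomp a e ∧ Incomp a ϱ
        · by_cases hFc : Incomp c e ∧ Incomp c ϱ
          · rw [EFF hFa.1 hFa.2 hFb.1 hFb.2, EFF hFb.1 hFb.2 hFc.1 hFc.2]
            rcases hFFval hFa.1 hFa.2 hFb.1 hFb.2 with h | ⟨hab, hqa, h⟩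
            · rw [h, EtopL c]
              rcases hFFval hFb.1 hFb.2 hFc.1 hFc.2 with h2 | ⟨hbc, hqb, h2⟩
              · rw [h2, EtopR a]
              · rw [h2, EFF hFa.1 hFa.2 hFb.1 hFb.2, h]
            · rw [h]
              rcases hFFval hFb.1 hFb.2 hFc.1 hFc.2 with h2 | ⟨hbc, hqb, h2⟩
              · rw [h2, EtopR a, EFF hFa.1 hFa.2 hFc.1 hFc.2, hab, h2]
              · rw [h2, hbc]
          · rw [EFF hFa.1 hFa.2 hFb.1 hFb.2, EWW hb' hc (fun h => hFc h.2), EtopR a]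
            rcases hFFval hFa.1 hFa.2 hFb.1 hFb.2 with h | ⟨hab, hqa, h⟩
            · rw [h, EtopL c]
            · rw [h, EWW ha hc (fun hh => hFc hh.2)]
        · rw [EWW ha hb' (fun h => hFa h.1), EtopL c]
          by_cases hFc : Incomp c e ∧ Incomp c ϱ
          · rw [EFF hFb.1 hFb.2 hFc.1 hFc.2]
            rcases hFFval hFb.1 hFb.2 hFc.1 hFc.2 with h | ⟨hbc, hqb, h⟩
            · rw [h, EtopR a]
            · rw [h, EWW ha hb' (fun hh => hFa hh.1)]
          · rw [EWW hb' hc (fun h => hFc h.2), EtopR a]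
      · rw [EWW ha hb' (fun h => hFb h.2), EtopL c, EWW hb' hc (fun h => hFb h.1), EtopR a]
  constructor
  · -- forward direction
    intro hUni x y hxe hxϱ hxq hye hyϱ
    by_contra hxy
    have hyϱ' : y ≤ ϱ := by
      by_contra h
      have hϱy : ϱ ≤ y := by
        by_contra h2
        exact hyϱ ⟨h, h2⟩
      exact hye.2 (heϱ.trans hϱy)
    have hnxy : ¬ x ≤ y := fun h => hxϱ.1 (h.trans hyϱ')
    have hyx : y ≤ x := by
      by_contra h
      exact hxy ⟨hnxy, h⟩
    have hqx : q ≤ x := hqle hxe hxϱ hxq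
    have hUxy : U x y = ⊤ := ETOP (fun h => hxϱ.1 h.1) (fun h => hye.1 h.2)
      (fun h => hxe.1 h.1) (fun h => h.2.2.1 hyϱ')
    have hUxx : U x x = x := by
      rw [EFF hxe hxϱ hxe hxϱ, sup_idem]
      exact sup_eq_left.mpr hqx
    have hm := (hUni.2.2.2.2.1 y (Set.mem_univ y) x (Set.mem_univ x) x (Set.mem_univ x) hyx).2
    rw [hUxy, hUxx] at hm
    exact hxϱ.2 (le_top.trans hm)
  · -- backward direction
    intro hC
    have key : ∀ a b c : L, a ≤ b → U a c ≤ U b c := by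
      intro a b c hab
      by_cases hcϱ : c ≤ ϱ
      · by_cases hbϱ : b ≤ ϱ
        · have haϱ := hab.trans hbϱ
          rw [EPP haϱ hcϱ, EPP hbϱ hcϱ]
          exact (hmono' haϱ hbϱ hcϱ hab).1
        · by_cases hce : c ≤ e
          · rw [EWA hbϱ hce]
            by_cases haϱ : a ≤ ϱ
            · rw [EPP haϱ hcϱ]
              have h1 := (hmono' hcϱ heϱ haϱ hce).2
              rw [(hneut haϱ).2] at h1
              exact h1.trans hab
            · rw [EWA haϱ hce]
              exact hab
          · rw [EWB hbϱ hcϱ hce]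
            exact le_top
      · by_cases hae : a ≤ e
        · rw [EAW hae hcϱ]
          by_cases hbe : b ≤ e
          · rw [EAW hbe hcϱ]
          · by_cases hbϱ : b ≤ ϱ
            · rw [EBW hbϱ hbe hcϱ]
              exact le_top
            · by_cases hF : (Incomp b e ∧ Incomp b ϱ) ∧ (Incomp c e ∧ Incomp c ϱ)
              · rw [EFF hF.1.1 hF.1.2 hF.2.1 hF.2.2]
                exact le_sup_of_le_left le_sup_right
              · rw [EWW hbϱ hcϱ hF]
                exact le_top
        · by_cases haϱ : a ≤ ϱ
          · rw [EBW haϱ hae hcϱ]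
            have hbe : ¬ b ≤ e := fun h => hae (hab.trans h)
            by_cases hbϱ : b ≤ ϱ
            · rw [EBW hbϱ hbe hcϱ]
            · by_cases hF : (Incomp b e ∧ Incomp b ϱ) ∧ (Incomp c e ∧ Incomp c ϱ)
              · rw [EFF hF.1.1 hF.1.2 hF.2.1 hF.2.2]
                have haeI : Incomp a e := ⟨hae, fun h => hF.1.1.2 (h.trans hab)⟩
                have haϱI : ¬ Incomp a ϱ := fun h => h.1 haϱ
                by_cases hbq : Incomp b q
                · have h1 := hjq b hF.1.1 hF.1.2 hbq
                  have h2 : b ⊔ c ⊔ q = ⊤ := by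
                    rw [sup_right_comm, h1]
                    simp
                  rw [h2]
                · exact absurd hab (hC b a hF.1.1 hF.1.2 hbq haeI haϱI).2
              · rw [EWW hbϱ hcϱ hF]
          · by_cases hbϱ : b ≤ ϱ
            · exact absurd (hab.trans hbϱ) haϱ
            · by_cases hFb : (Incomp b e ∧ Incomp b ϱ) ∧ (Incomp c e ∧ Incomp c ϱ)
              · have haI : Incomp a e ∧ Incomp a ϱ :=
                  ⟨⟨hae, fun h => hFb.1.1.2 (h.trans hab)⟩,
                    ⟨haϱ, fun h => hFb.1.2.2 (h.trans hab)⟩⟩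
                rw [EFF haI.1 haI.2 hFb.2.1 hFb.2.2, EFF hFb.1.1 hFb.1.2 hFb.2.1 hFb.2.2]
                exact sup_le_sup_right (sup_le_sup_right hab _) _
              · rw [EWW hbϱ hcϱ hFb]
                exact le_top
    refine ⟨Set.mem_univ e, fun _ _ _ _ => Set.mem_univ _, fun a _ b _ => comm a b,
      fun a _ b _ c _ => assoc a b c, fun a _ b _ c _ hab => ⟨key a b c hab, ?_⟩,
      fun a _ => neut a⟩
    rw [comm c a, comm c b]
    exact key a b c hab
end

section
/- Let L be a bounded lattice, ϱ ∈ L∖{0,1}, U* a uninorm on [0,ϱ] with neutral element e, and q ∈ (0,e) ∪ I_e^ϱ. Assume that x ∨ y = 1 for all x, y ∈ I_{e,ϱ} with x ≠ y, that x ∨ q = 1 for all x ∈ I_{e,ϱ} with x ∥ q, and that I_ϱ^e ∪ I_{e,ϱ} ∪ (ϱ,1) ≠ ∅. Then the function U_q given by formula (1) is a uninorm on L with neutral element e if and only if U* ∈ U_b and x ∥ y for all x ∈ I_{e,ϱ} with x ∦ q and all y ∈ I_e^ϱ. -/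
attribute [local instance] Classical.propDecidable

variable {L : Type*}

section Aux

variable [Lattice L] [BoundedOrder L] {U : L → L → L} {ϱ e q x y : L}

theorem uq_star (hx : x ≤ ϱ) (hy : y ≤ ϱ) : Uq U ϱ e q x y = U x y := by
  unfold Uq; rw [if_pos ⟨hx, hy⟩]

theorem uq_left (hx : ¬ x ≤ ϱ) (hy : y ≤ e) : Uq U ϱ e q x y = x := by
  unfold Uq; rw [if_neg (fun h => hx h.1), if_pos ⟨hx, hy⟩]

theorem uq_right (he : e ≤ ϱ) (hx : x ≤ e) (hy : ¬ y ≤ ϱ) : Uq U ϱ e q x y = y := by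
  unfold Uq
  rw [if_neg (fun h => hy h.2), if_neg (fun h => h.1 (hx.trans he)), if_pos ⟨hx, hy⟩]

theorem uq_sup (hx : Incomp x e ∧ Incomp x ϱ) (hy : Incomp y e ∧ Incomp y ϱ) :
    Uq U ϱ e q x y = x ⊔ y ⊔ q := by
  unfold Uq
  rw [if_neg (fun h => hx.2.1 h.1), if_neg (fun h => hy.1.1 h.2),
    if_neg (fun h => hx.1.1 h.1), if_pos ⟨hx, hy⟩]

theorem uq_top (hxe : ¬ x ≤ e) (hye : ¬ y ≤ e) (hϱ : ¬ (x ≤ ϱ ∧ y ≤ ϱ))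
    (h4 : ¬ ((Incomp x e ∧ Incomp x ϱ) ∧ (Incomp y e ∧ Incomp y ϱ))) :
    Uq U ϱ e q x y = ⊤ := by
  unfold Uq
  rw [if_neg hϱ, if_neg (fun h => hye h.2), if_neg (fun h => hxe h.1), if_neg h4]

end Aux

theorem statement1 [Lattice L] [BoundedOrder L]
    (ϱ e q : L) (Ustar : L → L → L)
    (hϱ0 : ϱ ≠ ⊥) (hϱ1 : ϱ ≠ ⊤)
    (hU : IsUninormOn Ustar {x : L | x ≤ ϱ} e)
    (hq : (⊥ < q ∧ q < e) ∨ (Incomp q e ∧ ¬ Incomp q ϱ))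
    (hjoin : ∀ x y : L, Incomp x e → Incomp x ϱ → Incomp y e → Incomp y ϱ →
      x ≠ y → x ⊔ y = ⊤)
    (hjq : ∀ x : L, Incomp x e → Incomp x ϱ → Incomp x q → x ⊔ q = ⊤)
    (hne : ∃ x : L, (Incomp x ϱ ∧ ¬ Incomp x e) ∨ (Incomp x e ∧ Incomp x ϱ) ∨
      (ϱ < x ∧ x < ⊤)) :
    IsUninormOn (Uq Ustar ϱ e q) Set.univ e ↔
      ((∀ x ≤ ϱ, ∀ y ≤ ϱ, Ustar x y ≤ e → x ≤ e ∧ y ≤ e) ∧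
        ∀ x y : L, Incomp x e → Incomp x ϱ → ¬ Incomp x q →
          Incomp y e → ¬ Incomp y ϱ → Incomp x y) := by
  obtain ⟨heS, hcl, hcS, haS, hmS, hnS⟩ := hU
  simp only [Set.mem_setOf_eq] at heS hcl hcS haS hmS hnS
  have he : e ≤ ϱ := heS
  have hqϱ : q ≤ ϱ := by
    rcases hq with ⟨_, h⟩ | ⟨h1, h2⟩
    · exact h.le.trans he
    · by_cases hc : q ≤ ϱ
      · exact hc
      · exact absurd (he.trans (not_not.mp (not_and.mp h2 hc))) h1.2
  have htϱ : ¬ (⊤ : L) ≤ ϱ := fun h => hϱ1 (top_le_iff.mp h)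
  have hAe : ∀ t : L, ¬ t ≤ ϱ → ¬ t ≤ e := fun t h ht => h (ht.trans he)
  have hte : ¬ (⊤ : L) ≤ e := hAe ⊤ htϱ
  have hmem : ∀ t : L, t ∈ (Set.univ : Set L) := fun t => Set.mem_univ t
  have uqT1 : ∀ t : L, Uq Ustar ϱ e q ⊤ t = ⊤ := by
    intro t
    by_cases ht : t ≤ e
    · exact uq_left htϱ ht
    · exact uq_top hte ht (fun h => htϱ h.1) (fun h => h.1.1.2 le_top)
  have uqT2 : ∀ t : L, Uq Ustar ϱ e q t ⊤ = ⊤ := by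
    intro t
    by_cases ht : t ≤ e
    · exact uq_right he ht htϱ
    · exact uq_top ht hte (fun h => htϱ h.2) (fun h => h.2.1.2 le_top)
  constructor
  · -- forward direction
    intro hh
    obtain ⟨-, -, -, has, hmn, -⟩ := hh
    obtain ⟨z, hz⟩ := hne
    have hzϱ : ¬ z ≤ ϱ := by
      rcases hz with ⟨h, _⟩ | ⟨_, h⟩ | ⟨h, _⟩
      · exact h.1
      · exact h.1
      · exact h.not_ge
    have hzT : z ≠ ⊤ := by
      rcases hz with ⟨h, _⟩ | ⟨_, h⟩ | ⟨_, h⟩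
      · exact fun hzt => h.2 (hzt ▸ le_top)
      · exact fun hzt => h.2 (hzt ▸ le_top)
      · exact h.ne
    have hze : ¬ z ≤ e := hAe z hzϱ
    constructor
    · intro x hx y hy hxy
      by_contra hc
      have hcases : ¬ x ≤ e ∨ (x ≤ e ∧ ¬ y ≤ e) := by tauto
      rcases hcases with hxe | ⟨hxe, hye⟩
      · have h1 : Uq Ustar ϱ e q (Uq Ustar ϱ e q z x) y = ⊤ := by
          rw [uq_top hze hxe (fun h => hzϱ h.1) (fun h => h.2.2.1 hx), uqT1]
        have h2 : Uq Ustar ϱ e q z (Uq Ustar ϱ e q x y) = z := by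
          rw [uq_star hx hy, uq_left hzϱ hxy]
        have h3 := has z (hmem z) x (hmem x) y (hmem y)
        rw [h1, h2] at h3
        exact hzT h3.symm
      · have h1 : Uq Ustar ϱ e q (Uq Ustar ϱ e q x y) z = z := by
          rw [uq_star hx hy, uq_right he hxy hzϱ]
        have h2 : Uq Ustar ϱ e q x (Uq Ustar ϱ e q y z) = ⊤ := by
          rw [uq_top hye hze (fun h => hzϱ h.2) (fun h => h.1.2.1 hy), uqT2]
        have h3 := has x (hmem x) y (hmem y) z (hmem z)
        rw [h1, h2] at h3
        exact hzT h3
    · intro x y hxe hxϱ hxq hye hyϱ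
      by_contra hxy
      have hqx : q ≤ x := by
        by_cases h : q ≤ x
        · exact h
        · exact absurd ⟨fun hx' => hxϱ.1 (hx'.trans hqϱ), h⟩ hxq
      have hyϱ' : y ≤ ϱ := by
        by_cases hcy : y ≤ ϱ
        · exact hcy
        · exact absurd (he.trans (not_not.mp (not_and.mp hyϱ hcy))) hye.2
      have hyx : y ≤ x := by
        by_cases h : y ≤ x
        · exact h
        · exact absurd ⟨fun h' => hxϱ.1 (h'.trans hyϱ'), h⟩ hxy
      have h1 : Uq Ustar ϱ e q y x = ⊤ :=
        uq_top hye.1 hxe.1 (fun h => hxϱ.1 h.2) (fun h => h.1.2.1 hyϱ')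
      have h2 : Uq Ustar ϱ e q x x = x := by
        rw [uq_sup ⟨hxe, hxϱ⟩ ⟨hxe, hxϱ⟩, sup_idem, sup_eq_left.mpr hqx]
      have h3 := (hmn y (hmem y) x (hmem x) x (hmem x) hyx).1
      rw [h1, h2] at h3
      exact hxe.2 ((top_le_iff.mp h3) ▸ le_top)
  · -- backward direction
    rintro ⟨hUb, hb⟩
    have hBB : ∀ a b : L, a ≤ e → b ≤ e → Ustar a b ≤ e := by
      intro a b ha hb'
      have h1 : Ustar a b ≤ Ustar e b :=
        (hmS a (ha.trans he) e he b (hb'.trans he) ha).1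
      rw [(hnS b (hb'.trans he)).1] at h1
      exact h1.trans hb'
    have classify : ∀ t : L, ¬ t ≤ ϱ → (Incomp t e ∧ Incomp t ϱ) ∨ e ≤ t := by
      intro t ht
      by_cases h : e ≤ t
      · exact Or.inr h
      · exact Or.inl ⟨⟨hAe t ht, h⟩, ⟨ht, fun hx => h (he.trans hx)⟩⟩
    have uqC1 : ∀ a n : L, ¬ a ≤ e → a ≤ ϱ → ¬ n ≤ ϱ → Uq Ustar ϱ e q a n = ⊤ :=
      fun a n hae ha hn =>
        uq_top hae (hAe n hn) (fun h => hn h.2) (fun h => h.1.2.1 ha)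
    have uqC2 : ∀ a n : L, ¬ a ≤ e → a ≤ ϱ → ¬ n ≤ ϱ → Uq Ustar ϱ e q n a = ⊤ :=
      fun a n hae ha hn =>
        uq_top (hAe n hn) hae (fun h => hn h.1) (fun h => h.2.2.1 ha)
    have key : ∀ m n : L, ¬ m ≤ ϱ → ¬ n ≤ ϱ →
        Uq Ustar ϱ e q m n = ⊤ ∨
          (m = n ∧ (Incomp m e ∧ Incomp m ϱ) ∧ q ≤ m ∧ Uq Ustar ϱ e q m n = m) := by
      intro m n hm hn
      by_cases hmI : Incomp m e ∧ Incomp m ϱ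
      · by_cases hnI : Incomp n e ∧ Incomp n ϱ
        · have hv := uq_sup (U := Ustar) (q := q) hmI hnI
          by_cases hmn : m = n
          · subst hmn
            by_cases hqm : q ≤ m
            · exact Or.inr ⟨rfl, hmI, hqm, by rw [hv, sup_idem, sup_eq_left.mpr hqm]⟩
            · refine Or.inl ?_
              rw [hv, sup_idem]
              exact hjq m hmI.1 hmI.2 ⟨fun h => hmI.2.1 (h.trans hqϱ), hqm⟩
          · refine Or.inl ?_
            rw [hv, hjoin m n hmI.1 hmI.2 hnI.1 hnI.2 hmn, top_sup_eq]
        · exact Or.inl (uq_top (hAe m hm) (hAe n hn) (fun h => hm h.1) (fun h => hnI h.2))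
      · exact Or.inl (uq_top (hAe m hm) (hAe n hn) (fun h => hm h.1) (fun h => hmI h.1))
    have comm : ∀ a b : L, Uq Ustar ϱ e q a b = Uq Ustar ϱ e q b a := by
      intro a b
      by_cases ha : a ≤ ϱ <;> by_cases hb : b ≤ ϱ
      · rw [uq_star ha hb, uq_star hb ha, hcS a ha b hb]
      · by_cases hae : a ≤ e
        · rw [uq_right he hae hb, uq_left hb hae]
        · rw [uqC1 a b hae ha hb, uqC2 a b hae ha hb]
      · by_cases hbe : b ≤ e
        · rw [uq_left ha hbe, uq_right he hbe ha]
        · rw [uqC2 b a hbe hb ha, uqC1 b a hbe hb ha]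
      · by_cases hI : (Incomp a e ∧ Incomp a ϱ) ∧ (Incomp b e ∧ Incomp b ϱ)
        · rw [uq_sup hI.1 hI.2, uq_sup hI.2 hI.1, sup_comm a b]
        · rw [uq_top (hAe a ha) (hAe b hb) (fun h => ha h.1) hI,
            uq_top (hAe b hb) (hAe a ha) (fun h => hb h.1) (fun h => hI ⟨h.2, h.1⟩)]
    have mono1 : ∀ a b c : L, a ≤ b → Uq Ustar ϱ e q a c ≤ Uq Ustar ϱ e q b c := by
      intro a b c hab
      by_cases hc : c ≤ ϱ
      · by_cases hce : c ≤ e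
        · by_cases hbϱ : b ≤ ϱ
          · have haϱ : a ≤ ϱ := hab.trans hbϱ
            rw [uq_star haϱ hc, uq_star hbϱ hc]
            exact (hmS a haϱ b hbϱ c hc hab).1
          · rw [uq_left hbϱ hce]
            by_cases haϱ : a ≤ ϱ
            · rw [uq_star haϱ hc]
              calc Ustar a c ≤ Ustar a e := (hmS c hc e he a haϱ hce).2
                _ = a := (hnS a haϱ).2
                _ ≤ b := hab
            · rw [uq_left haϱ hce]; exact hab
        · by_cases hbϱ : b ≤ ϱ
          · have haϱ : a ≤ ϱ := hab.trans hbϱ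
            rw [uq_star haϱ hc, uq_star hbϱ hc]
            exact (hmS a haϱ b hbϱ c hc hab).1
          · rw [uqC2 c b hce hc hbϱ]; exact le_top
      · rcases classify c hc with hcI | hcG
        · by_cases hae : a ≤ e
          · rw [uq_right he hae hc]
            by_cases hbe : b ≤ e
            · rw [uq_right he hbe hc]
            · by_cases hbI : Incomp b e ∧ Incomp b ϱ
              · rw [uq_sup hbI hcI]
                exact le_sup_right.trans le_sup_left
              · by_cases hbϱ : b ≤ ϱ
                · rw [uqC1 b c hbe hbϱ hc]; exact le_top
                · rw [uq_top (hAe b hbϱ) (hAe c hc) (fun h => hc h.2) (fun h => hbI h.1)]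
                  exact le_top
          · have hbe : ¬ b ≤ e := fun h => hae (hab.trans h)
            by_cases haI : Incomp a e ∧ Incomp a ϱ
            · rw [uq_sup haI hcI]
              by_cases hbI : Incomp b e ∧ Incomp b ϱ
              · rw [uq_sup hbI hcI]
                exact sup_le_sup_right (sup_le_sup_right hab c) q
              · have hbϱ : ¬ b ≤ ϱ := fun h => haI.2.1 (hab.trans h)
                rw [uq_top hbe (hAe c hc) (fun h => hbϱ h.1) (fun h => hbI h.1)]
                exact le_top
            · have hLHS : Uq Ustar ϱ e q a c = ⊤ := by
                by_cases haϱ : a ≤ ϱ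
                · exact uqC1 a c hae haϱ hc
                · exact uq_top hae (hAe c hc) (fun h => haϱ h.1) (fun h => haI h.1)
              rw [hLHS, top_le_iff]
              by_cases hbI : Incomp b e ∧ Incomp b ϱ
              · rw [uq_sup hbI hcI]
                by_cases hbc : b = c
                · subst hbc
                  rw [sup_idem]
                  by_cases hqb : q ≤ b
                  · exfalso
                    have haϱ : a ≤ ϱ := by
                      by_cases h : a ≤ ϱ
                      · exact h
                      · exfalso
                        rcases classify a h with h' | h'
                        · exact haI h'
                        · exact hbI.1.2 (h'.trans hab)
                    have hIa : Incomp a e := ⟨hae, fun h => hbI.1.2 (h.trans hab)⟩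
                    have hres := hb b a hbI.1 hbI.2 (fun h => h.2 hqb) hIa (fun h => h.1 haϱ)
                    exact hres.2 hab
                  · exact hjq b hbI.1 hbI.2 ⟨fun h => hbI.2.1 (h.trans hqϱ), hqb⟩
                · rw [hjoin b c hbI.1 hbI.2 hcI.1 hcI.2 hbc, top_sup_eq]
              · by_cases hbϱ : b ≤ ϱ
                · exact uqC1 b c hbe hbϱ hc
                · exact uq_top hbe (hAe c hc) (fun h => hbϱ h.1) (fun h => hbI h.1)
        · have hce : ¬ c ≤ e := hAe c hc
          have h4c : ∀ t : L,
              ¬ ((Incomp t e ∧ Incomp t ϱ) ∧ (Incomp c e ∧ Incomp c ϱ)) :=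
            fun t h => h.2.1.2 hcG
          by_cases hae : a ≤ e
          · rw [uq_right he hae hc]
            by_cases hbe : b ≤ e
            · rw [uq_right he hbe hc]
            · rw [uq_top hbe hce (fun h => hc h.2) (h4c b)]; exact le_top
          · have hbe : ¬ b ≤ e := fun h => hae (hab.trans h)
            rw [uq_top hbe hce (fun h => hc h.2) (h4c b)]; exact le_top
    have assoc : ∀ a b c : L,
        Uq Ustar ϱ e q (Uq Ustar ϱ e q a b) c = Uq Ustar ϱ e q a (Uq Ustar ϱ e q b c) := by
      intro a b c
      by_cases ha : a ≤ ϱ <;> by_cases hb : b ≤ ϱ <;> by_cases hc : c ≤ ϱ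
      · rw [uq_star ha hb, uq_star hb hc, uq_star (hcl a ha b hb) hc,
          uq_star ha (hcl b hb c hc), haS a ha b hb c hc]
      · -- (A, A, n)
        rw [uq_star ha hb]
        by_cases hae : a ≤ e
        · by_cases hbe : b ≤ e
          · rw [uq_right he (hBB a b hae hbe) hc, uq_right he hbe hc, uq_right he hae hc]
          · have hU' : ¬ Ustar a b ≤ e := fun h => hbe (hUb a ha b hb h).2
            rw [uqC1 _ c hU' (hcl a ha b hb) hc, uqC1 b c hbe hb hc, uqT2 a]
        · have hU' : ¬ Ustar a b ≤ e := fun h => hae (hUb a ha b hb h).1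
          rw [uqC1 _ c hU' (hcl a ha b hb) hc]
          by_cases hbe : b ≤ e
          · rw [uq_right he hbe hc, uqC1 a c hae ha hc]
          · rw [uqC1 b c hbe hb hc, uqT2 a]
      · -- (A, n, A)
        by_cases hae : a ≤ e
        · rw [uq_right he hae hb]
          by_cases hce : c ≤ e
          · rw [uq_left hb hce, uq_right he hae hb]
          · rw [uqC2 c b hce hc hb, uqT2 a]
        · rw [uqC1 a b hae ha hb, uqT1 c]
          by_cases hce : c ≤ e
          · rw [uq_left hb hce, uqC1 a b hae ha hb]
          · rw [uqC2 c b hce hc hb, uqT2 a]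
      · -- (A, n, n)
        by_cases hae : a ≤ e
        · rw [uq_right he hae hb]
          rcases key b c hb hc with hk | ⟨hbc, hbI, hqb, hk⟩
          · rw [hk, uqT2 a]
          · rw [hk, uq_right he hae hb]
        · rw [uqC1 a b hae ha hb, uqT1 c]
          rcases key b c hb hc with hk | ⟨hbc, hbI, hqb, hk⟩
          · rw [hk, uqT2 a]
          · rw [hk, uqC1 a b hae ha hb]
      · -- (n, A, A)
        by_cases hbe : b ≤ e
        · rw [uq_left ha hbe]
          by_cases hce : c ≤ e
          · rw [uq_left ha hce, uq_star hb hc, uq_left ha (hBB b c hbe hce)]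
          · have hU' : ¬ Ustar b c ≤ e := fun h => hce (hUb b hb c hc h).2
            rw [uqC2 c a hce hc ha, uq_star hb hc, uqC2 _ a hU' (hcl b hb c hc) ha]
        · rw [uqC2 b a hbe hb ha, uqT1 c, uq_star hb hc]
          have hU' : ¬ Ustar b c ≤ e := fun h => hbe (hUb b hb c hc h).1
          rw [uqC2 _ a hU' (hcl b hb c hc) ha]
      · -- (n, A, n)
        by_cases hbe : b ≤ e
        · rw [uq_left ha hbe, uq_right he hbe hc]
        · rw [uqC2 b a hbe hb ha, uqT1 c, uqC1 b c hbe hb hc, uqT2 a]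
      · -- (n, n, A)
        rcases key a b ha hb with hk | ⟨hab, haI, hqa, hk⟩
        · rw [hk, uqT1 c]
          by_cases hce : c ≤ e
          · rw [uq_left hb hce, hk]
          · rw [uqC2 c b hce hc hb, uqT2 a]
        · rw [hk]
          subst hab
          by_cases hce : c ≤ e
          · rw [uq_left ha hce, hk]
          · rw [uqC2 c a hce hc ha, uqT2 a]
      · -- (n, n, n)
        rcases key a b ha hb with hk | ⟨hab, haI, hqa, hk⟩
        · rw [hk, uqT1 c]
          rcases key b c hb hc with hk' | ⟨hbc, hbI, hqb, hk'⟩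
          · rw [hk', uqT2 a]
          · rw [hk', hk]
        · rw [hk]
          subst hab
          rcases key a c ha hc with hk' | ⟨hac, _, _, hk'⟩
          · rw [hk', uqT2 a]
          · rw [hk', hk]
    have neut : ∀ t : L, Uq Ustar ϱ e q e t = t ∧ Uq Ustar ϱ e q t e = t := by
      intro t
      by_cases ht : t ≤ ϱ
      · exact ⟨by rw [uq_star he ht]; exact (hnS t ht).1,
          by rw [uq_star ht he]; exact (hnS t ht).2⟩
      · exact ⟨uq_right he le_rfl ht, uq_left ht le_rfl⟩
    exact ⟨Set.mem_univ e, fun x _ y _ => Set.mem_univ _, fun x _ y _ => comm x y,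
      fun x _ y _ z _ => assoc x y z,
      fun x _ y _ z _ hxy => ⟨mono1 x y z hxy, by
        rw [comm z x, comm z y]; exact mono1 x y z hxy⟩,
      fun x _ => neut x⟩
end

section
/- Let L be a bounded lattice, ϱ ∈ L∖{0,1}, U* a uninorm on [0,ϱ] with neutral element e, and q ∈ I_ϱ^e. Assume that x ∨ q = 1 for all x ∈ I_{e,ϱ} with x ∥ q, and that U* ∈ U_b. Then the function U_q given by formula (1) is a uninorm on L with neutral element e if and only if x ∥ y for all x ∈ I_{e,ϱ} with x ∦ q and all y ∈ I_e^ϱ. -/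
attribute [local instance] Classical.propDecidable

variable {L : Type*}

set_option linter.unusedVariables false
set_option linter.unusedSectionVars false

namespace UqAux

def Er [Lattice L] (e ϱ z : L) : Prop := Incomp z e ∧ Incomp z ϱ

variable [Lattice L] [BoundedOrder L] {ϱ e q : L} {Ustar : L → L → L}

lemma uq_AA {x y : L} (hx : x ≤ ϱ) (hy : y ≤ ϱ) :
    Uq Ustar ϱ e q x y = Ustar x y := by simp [Uq, hx, hy]

lemma uq_xlow {x y : L} (hx : ¬ x ≤ ϱ) (hy : y ≤ e) :
    Uq Ustar ϱ e q x y = x := by simp [Uq, hx, hy]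

lemma uq_lowy (heϱ : e ≤ ϱ) {x y : L} (hx : x ≤ e) (hy : ¬ y ≤ ϱ) :
    Uq Ustar ϱ e q x y = y := by simp [Uq, hy, hx, hx.trans heϱ]

lemma uq_EE {x y : L} (hx : Er e ϱ x) (hy : Er e ϱ y) :
    Uq Ustar ϱ e q x y = x ⊔ y ⊔ q := by
  obtain ⟨⟨h1, h2⟩, h3, h4⟩ := hx
  obtain ⟨⟨g1, g2⟩, g3, g4⟩ := hy
  simp [Uq, Incomp, h1, h2, h3, h4, g1, g2, g3, g4]

lemma uq_top1 (heϱ : e ≤ ϱ) {x y : L} (hx : ¬ x ≤ ϱ) (hy : y ≤ ϱ) (hye : ¬ y ≤ e) :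
    Uq Ustar ϱ e q x y = ⊤ := by
  have hxe : ¬ x ≤ e := fun h => hx (h.trans heϱ)
  simp [Uq, Incomp, hx, hy, hye, hxe]

lemma uq_top2 (heϱ : e ≤ ϱ) {x y : L} (hx : x ≤ ϱ) (hxe : ¬ x ≤ e) (hy : ¬ y ≤ ϱ) :
    Uq Ustar ϱ e q x y = ⊤ := by
  simp [Uq, Incomp, hx, hxe, hy]

lemma uq_top3 (heϱ : e ≤ ϱ) {x y : L} (hx : ¬ x ≤ ϱ) (hy : ¬ y ≤ ϱ)
    (h : e ≤ x ∨ e ≤ y) : Uq Ustar ϱ e q x y = ⊤ := by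
  have hxe : ¬ x ≤ e := fun h' => hx (h'.trans heϱ)
  have hye : ¬ y ≤ e := fun h' => hy (h'.trans heϱ)
  rcases h with h | h
  · simp [Uq, Incomp, hx, hy, hxe, hye, h]
  · simp [Uq, Incomp, hx, hy, hxe, hye, h]

lemma reg3 (heϱ : e ≤ ϱ) (z : L) : z ≤ ϱ ∨ (¬ z ≤ ϱ ∧ e ≤ z) ∨ Er e ϱ z := by
  by_cases h1 : z ≤ ϱ
  · exact Or.inl h1
  by_cases h2 : e ≤ z
  · exact Or.inr (Or.inl ⟨h1, h2⟩)
  · exact Or.inr (Or.inr ⟨⟨fun h => h1 (h.trans heϱ), h2⟩, ⟨h1, fun h => h2 (heϱ.trans h)⟩⟩)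

lemma uq_D_r (heϱ : e ≤ ϱ) {w : L} (hw : ¬ w ≤ ϱ) (hew : e ≤ w) (v : L) :
    Uq Ustar ϱ e q w v = if v ≤ e then w else ⊤ := by
  by_cases hv : v ≤ e
  · rw [if_pos hv, uq_xlow hw hv]
  · rw [if_neg hv]
    by_cases hv2 : v ≤ ϱ
    · exact uq_top1 heϱ hw hv2 hv
    · exact uq_top3 heϱ hw hv2 (Or.inl hew)

lemma uq_D_l (heϱ : e ≤ ϱ) {w : L} (hw : ¬ w ≤ ϱ) (hew : e ≤ w) (v : L) :
    Uq Ustar ϱ e q v w = if v ≤ e then w else ⊤ := by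
  by_cases hv : v ≤ e
  · rw [if_pos hv, uq_lowy heϱ hv hw]
  · rw [if_neg hv]
    by_cases hv2 : v ≤ ϱ
    · exact uq_top2 heϱ hv2 hv hw
    · exact uq_top3 heϱ hv2 hw (Or.inr hew)

lemma top_notle (hϱ1 : ϱ ≠ ⊤) : ¬ (⊤ : L) ≤ ϱ := fun h => hϱ1 (top_le_iff.mp h)

lemma uq_top_r (heϱ : e ≤ ϱ) (hϱ1 : ϱ ≠ ⊤) (v : L) : Uq Ustar ϱ e q v ⊤ = ⊤ := by
  rw [uq_D_l heϱ (top_notle hϱ1) le_top v]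
  split_ifs <;> rfl

lemma uq_top_l (heϱ : e ≤ ϱ) (hϱ1 : ϱ ≠ ⊤) (v : L) : Uq Ustar ϱ e q ⊤ v = ⊤ := by
  rw [uq_D_r heϱ (top_notle hϱ1) le_top v]
  split_ifs <;> rfl

/-- The result of `Uq` on two arguments not below `ϱ` lies in the region `D`. -/
lemma uq_BB_D (heϱ : e ≤ ϱ) (hϱ1 : ϱ ≠ ⊤) (hqϱ : ¬ q ≤ ϱ) (heq : e ≤ q)
    {y z : L} (hy : ¬ y ≤ ϱ) (hz : ¬ z ≤ ϱ) :
    ¬ Uq Ustar ϱ e q y z ≤ ϱ ∧ e ≤ Uq Ustar ϱ e q y z := by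
  by_cases hEy : Er e ϱ y
  · by_cases hEz : Er e ϱ z
    · rw [uq_EE hEy hEz]
      exact ⟨fun h => hqϱ (le_sup_right.trans h), heq.trans le_sup_right⟩
    · rcases reg3 heϱ z with h | ⟨_, h⟩ | h
      · exact absurd h hz
      · rw [uq_top3 heϱ hy hz (Or.inr h)]
        exact ⟨top_notle hϱ1, le_top⟩
      · exact absurd h hEz
  · rcases reg3 heϱ y with h | ⟨_, h⟩ | h
    · exact absurd h hy
    · rw [uq_top3 heϱ hy hz (Or.inl h)]
      exact ⟨top_notle hϱ1, le_top⟩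
    · exact absurd h hEy

lemma uq_comm (heϱ : e ≤ ϱ)
    (hcomm : ∀ x ∈ {x : L | x ≤ ϱ}, ∀ y ∈ {x : L | x ≤ ϱ}, Ustar x y = Ustar y x)
    (x y : L) : Uq Ustar ϱ e q x y = Uq Ustar ϱ e q y x := by
  by_cases hx : x ≤ ϱ <;> by_cases hy : y ≤ ϱ
  · rw [uq_AA hx hy, uq_AA hy hx]; exact hcomm x hx y hy
  · by_cases hxe : x ≤ e
    · rw [uq_lowy heϱ hxe hy, uq_xlow hy hxe]
    · rw [uq_top2 heϱ hx hxe hy, uq_top1 heϱ hy hx hxe]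
  · by_cases hye : y ≤ e
    · rw [uq_xlow hx hye, uq_lowy heϱ hye hx]
    · rw [uq_top1 heϱ hx hy hye, uq_top2 heϱ hy hye hx]
  · by_cases hEx : Er e ϱ x
    · by_cases hEy : Er e ϱ y
      · rw [uq_EE hEx hEy, uq_EE hEy hEx, sup_comm x y]
      · rcases reg3 heϱ y with h | ⟨_, h⟩ | h
        · exact absurd h hy
        · rw [uq_top3 heϱ hx hy (Or.inr h), uq_top3 heϱ hy hx (Or.inl h)]
        · exact absurd h hEy
    · rcases reg3 heϱ x with h | ⟨_, h⟩ | h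
      · exact absurd h hx
      · rw [uq_top3 heϱ hx hy (Or.inl h), uq_top3 heϱ hy hx (Or.inr h)]
      · exact absurd h hEx


lemma uq_assoc (heϱ : e ≤ ϱ) (hϱ1 : ϱ ≠ ⊤) (hqϱ : ¬ q ≤ ϱ) (heq : e ≤ q)
    (hU : IsUninormOn Ustar {x : L | x ≤ ϱ} e)
    (hb : ∀ x ≤ ϱ, ∀ y ≤ ϱ, Ustar x y ≤ e → x ≤ e ∧ y ≤ e)
    (x y z : L) :
    Uq Ustar ϱ e q (Uq Ustar ϱ e q x y) z = Uq Ustar ϱ e q x (Uq Ustar ϱ e q y z) := by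
  obtain ⟨heS, hcl, hcomm, hassoc, hmono, hneu⟩ := hU
  have hee : ∀ a b : L, a ≤ e → b ≤ e → Ustar a b ≤ e := by
    intro a b ha hb'
    have h1 : Ustar a b ≤ Ustar a e :=
      (hmono b (hb'.trans heϱ) e heϱ a (ha.trans heϱ) hb').2
    exact h1.trans ((hneu a (ha.trans heϱ)).2.le.trans ha)
  by_cases hx : x ≤ ϱ <;> by_cases hy : y ≤ ϱ <;> by_cases hz : z ≤ ϱ
  · -- (A,A,A)
    rw [uq_AA hx hy, uq_AA hy hz, uq_AA (hcl x hx y hy) hz, uq_AA hx (hcl y hy z hz)]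
    exact hassoc x hx y hy z hz
  · -- (A,A,B)
    rw [uq_AA hx hy]
    by_cases hye : y ≤ e
    · by_cases hxe : x ≤ e
      · rw [uq_lowy heϱ (hee x y hxe hye) hz, uq_lowy heϱ hye hz, uq_lowy heϱ hxe hz]
      · have hu : ¬ Ustar x y ≤ e := fun h => hxe (hb x hx y hy h).1
        rw [uq_top2 heϱ (hcl x hx y hy) hu hz, uq_lowy heϱ hye hz,
          uq_top2 heϱ hx hxe hz]
    · have hu : ¬ Ustar x y ≤ e := fun h => hye (hb x hx y hy h).2
      rw [uq_top2 heϱ (hcl x hx y hy) hu hz, uq_top2 heϱ hy hye hz,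
        uq_top_r heϱ hϱ1 x]
  · -- (A,B,A)
    by_cases hxe : x ≤ e <;> by_cases hze : z ≤ e
    · rw [uq_lowy heϱ hxe hy, uq_xlow hy hze, uq_lowy heϱ hxe hy]
    · rw [uq_lowy heϱ hxe hy, uq_top1 heϱ hy hz hze, uq_top_r heϱ hϱ1 x]
    · rw [uq_top2 heϱ hx hxe hy, uq_top_l heϱ hϱ1 z, uq_xlow hy hze,
        uq_top2 heϱ hx hxe hy]
    · rw [uq_top2 heϱ hx hxe hy, uq_top_l heϱ hϱ1 z, uq_top1 heϱ hy hz hze,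
        uq_top_r heϱ hϱ1 x]
  · -- (A,B,B)
    by_cases hxe : x ≤ e
    · rw [uq_lowy heϱ hxe hy]
      have hw := uq_BB_D (Ustar := Ustar) heϱ hϱ1 hqϱ heq hy hz
      rw [uq_lowy heϱ hxe hw.1]
    · rw [uq_top2 heϱ hx hxe hy, uq_top_l heϱ hϱ1 z]
      have hw := uq_BB_D (Ustar := Ustar) heϱ hϱ1 hqϱ heq hy hz
      rw [uq_D_l heϱ hw.1 hw.2 x, if_neg hxe]
  · -- (B,A,A)
    by_cases hye : y ≤ e
    · rw [uq_xlow hx hye, uq_AA hy hz]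
      by_cases hze : z ≤ e
      · rw [uq_xlow hx hze, uq_xlow hx (hee y z hye hze)]
      · have hu : ¬ Ustar y z ≤ e := fun h => hze (hb y hy z hz h).2
        rw [uq_top1 heϱ hx hz hze, uq_top1 heϱ hx (hcl y hy z hz) hu]
    · have hu : ¬ Ustar y z ≤ e := fun h => hye (hb y hy z hz h).1
      rw [uq_top1 heϱ hx hy hye, uq_top_l heϱ hϱ1 z, uq_AA hy hz,
        uq_top1 heϱ hx (hcl y hy z hz) hu]
  · -- (B,A,B)
    by_cases hye : y ≤ e
    · rw [uq_xlow hx hye, uq_lowy heϱ hye hz]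
    · rw [uq_top1 heϱ hx hy hye, uq_top_l heϱ hϱ1 z, uq_top2 heϱ hy hye hz,
        uq_top_r heϱ hϱ1 x]
  · -- (B,B,A)
    have hw := uq_BB_D (Ustar := Ustar) heϱ hϱ1 hqϱ heq hx hy
    by_cases hze : z ≤ e
    · rw [uq_xlow hy hze, uq_D_r heϱ hw.1 hw.2 z, if_pos hze]
    · rw [uq_D_r heϱ hw.1 hw.2 z, if_neg hze, uq_top1 heϱ hy hz hze,
        uq_top_r heϱ hϱ1 x]
  · -- (B,B,B)
    have hw := uq_BB_D (Ustar := Ustar) heϱ hϱ1 hqϱ heq hx hy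
    have hw' := uq_BB_D (Ustar := Ustar) heϱ hϱ1 hqϱ heq hy hz
    rw [uq_D_r heϱ hw.1 hw.2 z, if_neg (fun h : z ≤ e => hz (h.trans heϱ)),
      uq_D_l heϱ hw'.1 hw'.2 x, if_neg (fun h : x ≤ e => hx (h.trans heϱ))]


lemma uq_mono_left (heϱ : e ≤ ϱ) (hϱ1 : ϱ ≠ ⊤) (hqϱ : ¬ q ≤ ϱ) (heq : e ≤ q)
    (hU : IsUninormOn Ustar {x : L | x ≤ ϱ} e)
    (hjq : ∀ x : L, Incomp x e → Incomp x ϱ → Incomp x q → x ⊔ q = ⊤)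
    (hC : ∀ x y : L, Incomp x e → Incomp x ϱ → ¬ Incomp x q →
        Incomp y e → ¬ Incomp y ϱ → Incomp x y)
    {x y : L} (z : L) (hxy : x ≤ y) :
    Uq Ustar ϱ e q x z ≤ Uq Ustar ϱ e q y z := by
  obtain ⟨heS, hcl, hcomm, hassoc, hmono, hneu⟩ := hU
  by_cases hz : z ≤ ϱ
  · by_cases hze : z ≤ e
    · by_cases hx : x ≤ ϱ
      · by_cases hy : y ≤ ϱ
        · rw [uq_AA hx hz, uq_AA hy hz]
          exact (hmono x hx y hy z hz hxy).1
        · rw [uq_AA hx hz, uq_xlow hy hze]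
          have h1 : Ustar x z ≤ Ustar x e := (hmono z hz e heϱ x hx hze).2
          exact h1.trans ((hneu x hx).2.le.trans hxy)
      · have hy : ¬ y ≤ ϱ := fun h => hx (hxy.trans h)
        rw [uq_xlow hx hze, uq_xlow hy hze]
        exact hxy
    · by_cases hy : y ≤ ϱ
      · have hx : x ≤ ϱ := hxy.trans hy
        rw [uq_AA hx hz, uq_AA hy hz]
        exact (hmono x hx y hy z hz hxy).1
      · rw [uq_top1 heϱ hy hz hze]
        exact le_top
  · by_cases hxe : x ≤ e
    · rw [uq_lowy heϱ hxe hz]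
      by_cases hye : y ≤ e
      · rw [uq_lowy heϱ hye hz]
      · by_cases hy : y ≤ ϱ
        · rw [uq_top2 heϱ hy hye hz]; exact le_top
        · rcases reg3 heϱ y with h | ⟨_, hey⟩ | hEy
          · exact absurd h hy
          · rw [uq_top3 heϱ hy hz (Or.inl hey)]; exact le_top
          · by_cases hEz : Er e ϱ z
            · rw [uq_EE hEy hEz]
              exact le_sup_right.trans le_sup_left
            · rcases reg3 heϱ z with h | ⟨_, hez⟩ | h
              · exact absurd h hz
              · rw [uq_top3 heϱ hy hz (Or.inr hez)]; exact le_top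
              · exact absurd h hEz
    · have hye : ¬ y ≤ e := fun h => hxe (hxy.trans h)
      by_cases hx : x ≤ ϱ
      · rw [uq_top2 heϱ hx hxe hz]
        by_cases hy : y ≤ ϱ
        · rw [uq_top2 heϱ hy hye hz]
        · rcases reg3 heϱ y with h | ⟨_, hey⟩ | hEy
          · exact absurd h hy
          · rw [uq_top3 heϱ hy hz (Or.inl hey)]
          · by_cases hEz : Er e ϱ z
            · rw [uq_EE hEy hEz]
              by_cases hyq : Incomp y q
              · calc (⊤ : L) = y ⊔ q := (hjq y hEy.1 hEy.2 hyq).symm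
                  _ ≤ y ⊔ z ⊔ q := sup_le (le_sup_left.trans le_sup_left) le_sup_right
              · have hex : ¬ e ≤ x := fun h => hEy.1.2 (h.trans hxy)
                have := (hC y x hEy.1 hEy.2 hyq ⟨hxe, hex⟩ (fun h => h.1 hx)).2
                exact absurd hxy this
            · rcases reg3 heϱ z with h | ⟨_, hez⟩ | h
              · exact absurd h hz
              · rw [uq_top3 heϱ hy hz (Or.inr hez)]
              · exact absurd h hEz
      · have hy : ¬ y ≤ ϱ := fun h => hx (hxy.trans h)
        rcases reg3 heϱ x with h | ⟨_, hex⟩ | hEx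
        · exact absurd h hx
        · rw [uq_top3 heϱ hx hz (Or.inl hex), uq_top3 heϱ hy hz (Or.inl (hex.trans hxy))]
        · by_cases hEz : Er e ϱ z
          · rw [uq_EE hEx hEz]
            rcases reg3 heϱ y with h | ⟨_, hey⟩ | hEy
            · exact absurd h hy
            · rw [uq_top3 heϱ hy hz (Or.inl hey)]; exact le_top
            · rw [uq_EE hEy hEz]
              exact sup_le_sup_right (sup_le_sup_right hxy z) q
          · rcases reg3 heϱ z with h | ⟨_, hez⟩ | h
            · exact absurd h hz
            · rw [uq_top3 heϱ hx hz (Or.inr hez), uq_top3 heϱ hy hz (Or.inr hez)]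
            · exact absurd h hEz

lemma uq_neutral (heϱ : e ≤ ϱ)
    (hneu : ∀ x ∈ {x : L | x ≤ ϱ}, Ustar e x = x ∧ Ustar x e = x) (x : L) :
    Uq Ustar ϱ e q e x = x ∧ Uq Ustar ϱ e q x e = x := by
  by_cases hx : x ≤ ϱ
  · rw [uq_AA heϱ hx, uq_AA hx heϱ]
    exact hneu x hx
  · rw [uq_lowy heϱ le_rfl hx, uq_xlow hx le_rfl]
    exact ⟨rfl, rfl⟩

end UqAux

theorem statement2 [Lattice L] [BoundedOrder L]
    (ϱ e q : L) (Ustar : L → L → L)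
    (hϱ0 : ϱ ≠ ⊥) (hϱ1 : ϱ ≠ ⊤)
    (hU : IsUninormOn Ustar {x : L | x ≤ ϱ} e)
    (hq : Incomp q ϱ ∧ ¬ Incomp q e)
    (hjq : ∀ x : L, Incomp x e → Incomp x ϱ → Incomp x q → x ⊔ q = ⊤)
    (hb : ∀ x ≤ ϱ, ∀ y ≤ ϱ, Ustar x y ≤ e → x ≤ e ∧ y ≤ e) :
    IsUninormOn (Uq Ustar ϱ e q) Set.univ e ↔
      ∀ x y : L, Incomp x e → Incomp x ϱ → ¬ Incomp x q →
        Incomp y e → ¬ Incomp y ϱ → Incomp x y := by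
  have heϱ : e ≤ ϱ := hU.1
  have hqϱ : ¬ q ≤ ϱ := hq.1.1
  have heq : e ≤ q := by
    rcases not_and_or.mp hq.2 with h | h
    · exact absurd ((not_not.mp h).trans heϱ) hqϱ
    · exact not_not.mp h
  constructor
  · intro h x y hxe hxϱ hxq hye hyϱ
    have hmono := h.2.2.2.2.1
    have hyρ' : y ≤ ϱ := by
      rcases not_and_or.mp hyϱ with h' | h'
      · exact not_not.mp h'
      · exact absurd (heϱ.trans (not_not.mp h')) hye.2
    have hxq' : x ≤ q := by
      rcases not_and_or.mp hxq with h' | h'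
      · exact not_not.mp h'
      · exact absurd (heq.trans (not_not.mp h')) hxe.2
    refine ⟨fun h' => hxϱ.1 (h'.trans hyρ'), fun hyx => ?_⟩
    have hle : Uq Ustar ϱ e q y x ≤ Uq Ustar ϱ e q x x :=
      (hmono y (Set.mem_univ y) x (Set.mem_univ x) x (Set.mem_univ x) hyx).1
    rw [UqAux.uq_top2 heϱ hyρ' hye.1 hxϱ.1, UqAux.uq_EE ⟨hxe, hxϱ⟩ ⟨hxe, hxϱ⟩] at hle
    have hxx : x ⊔ x ⊔ q = q := by rw [sup_idem, sup_eq_right.mpr hxq']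
    rw [hxx] at hle
    exact hq.1.2 (le_top.trans hle)
  · intro hC
    refine ⟨Set.mem_univ e, fun _ _ _ _ => Set.mem_univ _, ?_, ?_, ?_, ?_⟩
    · intro a _ b _
      exact UqAux.uq_comm heϱ hU.2.2.1 a b
    · intro a _ b _ c _
      exact UqAux.uq_assoc heϱ hϱ1 hqϱ heq hU hb a b c
    · intro a _ b _ c _ hab
      refine ⟨UqAux.uq_mono_left heϱ hϱ1 hqϱ heq hU hjq hC c hab, ?_⟩
      rw [UqAux.uq_comm heϱ hU.2.2.1 c a, UqAux.uq_comm heϱ hU.2.2.1 c b]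
      exact UqAux.uq_mono_left heϱ hϱ1 hqϱ heq hU hjq hC c hab
    · intro a _
      exact UqAux.uq_neutral heϱ hU.2.2.2.2.2 a
end

section
/- Let L be a bounded lattice, σ ∈ L∖{0,1}, U* a uninorm on [σ,1] with neutral element e, and p ∈ (e,1) ∪ I_e^σ. Assume that x ∧ y = 0 for all x, y ∈ I_{e,σ} with x ≠ y, that x ∧ p = 0 for all x ∈ I_{e,σ} with x ∥ p, and that U* ∈ U_t. Then the function U_p given by formula (2) is a uninorm on L with neutral element e if and only if x ∥ y for all x ∈ I_{e,σ} with x ∦ p and all y ∈ I_e^σ. -/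
attribute [local instance] Classical.propDecidable

variable {L : Type*}

/-- Formula (2): the function `U_p` built from a uninorm `Ustar` on `[σ, ⊤]` with neutral
element `e` and an element `p ∈ L`. Here `[σ, ⊤] = {x | σ ≤ x}`, `[e, ⊤] = {x | e ≤ x}`,
`I_{e,σ} = {x | x ∥ e ∧ x ∥ σ}`. -/
noncomputable def Up [Lattice L] [BoundedOrder L] (Ustar : L → L → L) (σ e p : L)
    (x y : L) : L :=
  if σ ≤ x ∧ σ ≤ y then Ustar x y
  else if ¬ σ ≤ x ∧ e ≤ y then x
  else if e ≤ x ∧ ¬ σ ≤ y then y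
  else if (Incomp x e ∧ Incomp x σ) ∧ (Incomp y e ∧ Incomp y σ) then x ⊓ y ⊓ p
  else ⊥

section Helpers

variable [Lattice L] [BoundedOrder L] {σ e p : L} {Ustar : L → L → L}

lemma up_ss {x y : L} (hx : σ ≤ x) (hy : σ ≤ y) :
    Up Ustar σ e p x y = Ustar x y := by
  simp only [Up, if_pos (⟨hx, hy⟩ : σ ≤ x ∧ σ ≤ y)]

lemma up_nb {x y : L} (hσe : σ ≤ e) (hx : ¬ σ ≤ x) (hy : e ≤ y) :
    Up Ustar σ e p x y = x := by
  simp only [Up, if_neg (fun (h : σ ≤ x ∧ σ ≤ y) => hx h.1),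
    if_pos (⟨hx, hy⟩ : ¬ σ ≤ x ∧ e ≤ y)]

lemma up_bn {x y : L} (hσe : σ ≤ e) (hx : e ≤ x) (hy : ¬ σ ≤ y) :
    Up Ustar σ e p x y = y := by
  simp only [Up, if_neg (fun (h : σ ≤ x ∧ σ ≤ y) => hy h.2),
    if_neg (fun (h : ¬ σ ≤ x ∧ e ≤ y) => h.1 (hσe.trans hx)),
    if_pos (⟨hx, hy⟩ : e ≤ x ∧ ¬ σ ≤ y)]

lemma up_dd {x y : L} (hx1 : Incomp x e) (hx2 : Incomp x σ)
    (hy1 : Incomp y e) (hy2 : Incomp y σ) :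
    Up Ustar σ e p x y = x ⊓ y ⊓ p := by
  simp only [Up, if_neg (fun (h : σ ≤ x ∧ σ ≤ y) => hx2.2 h.1),
    if_neg (fun (h : ¬ σ ≤ x ∧ e ≤ y) => hy1.2 h.2),
    if_neg (fun (h : e ≤ x ∧ ¬ σ ≤ y) => hx1.2 h.1),
    if_pos (⟨⟨hx1, hx2⟩, hy1, hy2⟩ :
      (Incomp x e ∧ Incomp x σ) ∧ (Incomp y e ∧ Incomp y σ))]

lemma up_an_bot {x y : L} (hx : σ ≤ x) (hbx : ¬ e ≤ x) (hy : ¬ σ ≤ y) :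
    Up Ustar σ e p x y = ⊥ := by
  simp only [Up, if_neg (fun (h : σ ≤ x ∧ σ ≤ y) => hy h.2),
    if_neg (fun (h : ¬ σ ≤ x ∧ e ≤ y) => h.1 hx),
    if_neg (fun (h : e ≤ x ∧ ¬ σ ≤ y) => hbx h.1),
    if_neg (fun (h : (Incomp x e ∧ Incomp x σ) ∧ (Incomp y e ∧ Incomp y σ)) => h.1.2.2 hx)]

lemma up_na_bot {x y : L} (hσe : σ ≤ e) (hx : ¬ σ ≤ x) (hy : σ ≤ y) (hby : ¬ e ≤ y) :
    Up Ustar σ e p x y = ⊥ := by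
  simp only [Up, if_neg (fun (h : σ ≤ x ∧ σ ≤ y) => hx h.1),
    if_neg (fun (h : ¬ σ ≤ x ∧ e ≤ y) => hby h.2),
    if_neg (fun (h : e ≤ x ∧ ¬ σ ≤ y) => hx (hσe.trans h.1)),
    if_neg (fun (h : (Incomp x e ∧ Incomp x σ) ∧ (Incomp y e ∧ Incomp y σ)) => h.2.2.2 hy)]

lemma up_nn_bot {x y : L} (hσe : σ ≤ e) (hx : ¬ σ ≤ x) (hy : ¬ σ ≤ y)
    (hd : ¬ ((Incomp x e ∧ Incomp x σ) ∧ (Incomp y e ∧ Incomp y σ))) :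
    Up Ustar σ e p x y = ⊥ := by
  simp only [Up, if_neg (fun (h : σ ≤ x ∧ σ ≤ y) => hx h.1),
    if_neg (fun (h : ¬ σ ≤ x ∧ e ≤ y) => hy (hσe.trans h.2)),
    if_neg (fun (h : e ≤ x ∧ ¬ σ ≤ y) => hx (hσe.trans h.1)),
    if_neg hd]

lemma up_not_a (hσ0 : σ ≠ ⊥) (hσe : σ ≤ e) {x y : L} (hx : ¬ σ ≤ x) (hy : ¬ σ ≤ y) :
    ¬ σ ≤ Up Ustar σ e p x y := by
  by_cases hd : (Incomp x e ∧ Incomp x σ) ∧ (Incomp y e ∧ Incomp y σ)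
  · rw [up_dd hd.1.1 hd.1.2 hd.2.1 hd.2.2]
    exact fun h => hx (h.trans (inf_le_left.trans inf_le_left))
  · rw [up_nn_bot hσe hx hy hd]
    exact fun h => hσ0 (le_bot_iff.1 h)

lemma up_nn (hσe : σ ≤ e) (hσp : σ ≤ p)
    (hmeet : ∀ x y : L, Incomp x e → Incomp x σ → Incomp y e → Incomp y σ →
      x ≠ y → x ⊓ y = ⊥)
    (hmp : ∀ x : L, Incomp x e → Incomp x σ → Incomp x p → x ⊓ p = ⊥)
    {x y : L} (hx : ¬ σ ≤ x) (hy : ¬ σ ≤ y) :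
    Up Ustar σ e p x y = ⊥ ∨
      (x = y ∧ Incomp x e ∧ Incomp x σ ∧ x ≤ p ∧ Up Ustar σ e p x y = x) := by
  by_cases hd : (Incomp x e ∧ Incomp x σ) ∧ (Incomp y e ∧ Incomp y σ)
  · rw [up_dd hd.1.1 hd.1.2 hd.2.1 hd.2.2]
    by_cases hxy : x = y
    · subst hxy
      by_cases hxp : x ≤ p
      · exact Or.inr ⟨rfl, hd.1.1, hd.1.2, hxp, by rw [inf_idem, inf_eq_left.2 hxp]⟩
      · left
        have hpx : ¬ p ≤ x := fun h => hd.1.2.2 (hσp.trans h)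
        rw [inf_idem, hmp x hd.1.1 hd.1.2 ⟨hxp, hpx⟩]
    · left
      rw [hmeet x y hd.1.1 hd.1.2 hd.2.1 hd.2.2 hxy, bot_inf_eq]
  · exact Or.inl (up_nn_bot hσe hx hy hd)

end Helpers

theorem statement4 [Lattice L] [BoundedOrder L]
    (σ e p : L) (Ustar : L → L → L)
    (hσ0 : σ ≠ ⊥) (hσ1 : σ ≠ ⊤)
    (hU : IsUninormOn Ustar {x : L | σ ≤ x} e)
    (hp : (e < p ∧ p < ⊤) ∨ (Incomp p e ∧ ¬ Incomp p σ))
    (hmeet : ∀ x y : L, Incomp x e → Incomp x σ → Incomp y e → Incomp y σ →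
      x ≠ y → x ⊓ y = ⊥)
    (hmp : ∀ x : L, Incomp x e → Incomp x σ → Incomp x p → x ⊓ p = ⊥)
    (ht : ∀ x : L, σ ≤ x → ∀ y : L, σ ≤ y → e ≤ Ustar x y → e ≤ x ∧ e ≤ y) :
    IsUninormOn (Up Ustar σ e p) Set.univ e ↔
      ∀ x y : L, Incomp x e → Incomp x σ → ¬ Incomp x p →
        Incomp y e → ¬ Incomp y σ → Incomp x y := by
  obtain ⟨heS, hcl, hcomm, hassoc, hmono, hneut⟩ := hU
  have hσe : σ ≤ e := heS
  have hσp : σ ≤ p := by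
    rcases hp with ⟨h1, _⟩ | ⟨h1, h2⟩
    · exact hσe.trans h1.le
    · by_cases hpσ : p ≤ σ
      · exact absurd (hpσ.trans hσe) h1.1
      · by_contra h'
        exact h2 ⟨hpσ, h'⟩
  constructor
  · intro h x y hxe hxσ hxp hye hyσ
    have hσy : σ ≤ y := by
      by_contra h'
      exact hyσ ⟨fun hys => hye.1 (hys.trans hσe), h'⟩
    refine ⟨fun hxy => ?_, fun hyx => hxσ.2 (hσy.trans hyx)⟩
    have hm := (h.2.2.2.2.1 x (Set.mem_univ x) y (Set.mem_univ y) x (Set.mem_univ x) hxy).1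
    rw [up_dd hxe hxσ hxe hxσ, up_an_bot hσy hye.2 hxσ.2, inf_idem] at hm
    have hxp' : x ≤ p := by
      by_contra h'
      exact hxp ⟨h', fun hpx => hxσ.2 (hσp.trans hpx)⟩
    exact hxe.1 (((le_inf le_rfl hxp').trans hm).trans bot_le)
  · intro H
    have hbot : ¬ σ ≤ (⊥ : L) := fun h => hσ0 (le_bot_iff.1 h)
    have hbl : ∀ y : L, ¬ σ ≤ y → Up Ustar σ e p ⊥ y = ⊥ := fun y hy =>
      up_nn_bot hσe hbot hy fun h => h.1.1.1 bot_le
    have hbr : ∀ x : L, ¬ σ ≤ x → Up Ustar σ e p x ⊥ = ⊥ := fun x hx =>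
      up_nn_bot hσe hx hbot fun h => h.2.1.1 bot_le
    have hcl' : ∀ x y : L, σ ≤ x → σ ≤ y → σ ≤ Ustar x y := fun x y hx hy =>
      hcl x hx y hy
    have hUb : ∀ x y : L, σ ≤ x → σ ≤ y → e ≤ x → e ≤ y → e ≤ Ustar x y := by
      intro x y hx hy hbx hby
      have h1 := (hmono e hσe x hx y hy hbx).1
      rw [(hneut y hy).1] at h1
      exact hby.trans h1
    have hUnb1 : ∀ x y : L, σ ≤ x → σ ≤ y → ¬ e ≤ x → ¬ e ≤ Ustar x y :=
      fun x y hx hy hbx h => hbx (ht x hx y hy h).1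
    have hUnb2 : ∀ x y : L, σ ≤ x → σ ≤ y → ¬ e ≤ y → ¬ e ≤ Ustar x y :=
      fun x y hx hy hby h => hby (ht x hx y hy h).2
    have comm : ∀ x y : L, Up Ustar σ e p x y = Up Ustar σ e p y x := by
      intro x y
      by_cases hx : σ ≤ x
      · by_cases hy : σ ≤ y
        · rw [up_ss hx hy, up_ss hy hx, hcomm x hx y hy]
        · by_cases hbx : e ≤ x
          · rw [up_bn hσe hbx hy, up_nb hσe hy hbx]
          · rw [up_an_bot hx hbx hy, up_na_bot hσe hy hx hbx]
      · by_cases hy : σ ≤ y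
        · by_cases hby : e ≤ y
          · rw [up_nb hσe hx hby, up_bn hσe hby hx]
          · rw [up_na_bot hσe hx hy hby, up_an_bot hy hby hx]
        · by_cases hd : (Incomp x e ∧ Incomp x σ) ∧ (Incomp y e ∧ Incomp y σ)
          · rw [up_dd hd.1.1 hd.1.2 hd.2.1 hd.2.2, up_dd hd.2.1 hd.2.2 hd.1.1 hd.1.2,
              inf_comm x y]
          · exact (up_nn_bot hσe hx hy hd).trans
              (up_nn_bot hσe hy hx fun h => hd ⟨h.2, h.1⟩).symm
    have neut : ∀ x : L, Up Ustar σ e p e x = x ∧ Up Ustar σ e p x e = x := by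
      intro x
      by_cases hx : σ ≤ x
      · exact ⟨by rw [up_ss hσe hx]; exact (hneut x hx).1,
          by rw [up_ss hx hσe]; exact (hneut x hx).2⟩
      · exact ⟨up_bn hσe le_rfl hx, up_nb hσe hx le_rfl⟩
    have mono : ∀ x y z : L, x ≤ y → Up Ustar σ e p x z ≤ Up Ustar σ e p y z := by
      intro x y z hxy
      by_cases hz : σ ≤ z
      · by_cases hx : σ ≤ x
        · have hy' : σ ≤ y := hx.trans hxy
          rw [up_ss hx hz, up_ss hy' hz]
          exact (hmono x hx y hy' z hz hxy).1
        · by_cases hbz : e ≤ z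
          · by_cases hy' : σ ≤ y
            · rw [up_nb hσe hx hbz, up_ss hy' hz]
              have h1 := (hmono e hσe z hz y hy' hbz).2
              rw [(hneut y hy').2] at h1
              exact hxy.trans h1
            · rw [up_nb hσe hx hbz, up_nb hσe hy' hbz]
              exact hxy
          · rw [up_na_bot hσe hx hz hbz]
            exact bot_le
      · by_cases hbx : e ≤ x
        · rw [up_bn hσe hbx hz, up_bn hσe (hbx.trans hxy) hz]
        · by_cases hd : (Incomp x e ∧ Incomp x σ) ∧ (Incomp z e ∧ Incomp z σ)
          · rcases up_nn hσe hσp hmeet hmp hd.1.2.2 hd.2.2.2 with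
              h | ⟨hxz, hdx1, hdx2, hxp, h⟩
            · rw [h]; exact bot_le
            · rw [h]
              subst hxz
              by_cases hby : e ≤ y
              · rw [up_bn hσe hby hdx2.2]
              · by_cases hy' : σ ≤ y
                · by_cases hye : y ≤ e
                  · exact absurd (hxy.trans hye) hdx1.1
                  · have := H x y hdx1 hdx2 (fun hc => hc.1 hxp) ⟨hye, hby⟩
                      (fun hc => hc.2 hy')
                    exact absurd hxy this.1
                · by_cases hdy : Incomp y e ∧ Incomp y σ
                  · by_cases hyx : y = x
                    · rw [hyx, up_dd hdx1 hdx2 hdx1 hdx2, inf_idem]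
                      exact le_inf le_rfl hxp
                    · exfalso
                      have hb := hmeet x y hdx1 hdx2 hdy.1 hdy.2
                        (fun hc => hyx hc.symm)
                      rw [inf_eq_left.2 hxy] at hb
                      exact hdx1.1 (hb.le.trans bot_le)
                  · exfalso
                    rcases not_and_or.1 hdy with hc | hc
                    · rcases not_and_or.1 hc with hc' | hc'
                      · exact hdx1.1 (hxy.trans (not_not.1 hc'))
                      · exact hby (not_not.1 hc')
                    · rcases not_and_or.1 hc with hc' | hc'
                      · exact hdx2.1 (hxy.trans (not_not.1 hc'))
                      · exact hy' (not_not.1 hc')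
          · by_cases hx : σ ≤ x
            · rw [up_an_bot hx hbx hz]
              exact bot_le
            · rw [up_nn_bot hσe hx hz hd]
              exact bot_le
    have assoc : ∀ x y z : L,
        Up Ustar σ e p (Up Ustar σ e p x y) z = Up Ustar σ e p x (Up Ustar σ e p y z) := by
      intro x y z
      by_cases hx : σ ≤ x
      · by_cases hy : σ ≤ y
        · by_cases hz : σ ≤ z
          · rw [up_ss hx hy, up_ss (hcl' x y hx hy) hz, up_ss hy hz,
              up_ss hx (hcl' y z hy hz)]
            exact hassoc x hx y hy z hz
          · rw [up_ss hx hy]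
            by_cases hby : e ≤ y
            · rw [up_bn hσe hby hz]
              by_cases hbx : e ≤ x
              · rw [up_bn hσe (hUb x y hx hy hbx hby) hz, up_bn hσe hbx hz]
              · rw [up_an_bot (hcl' x y hx hy) (hUnb1 x y hx hy hbx) hz,
                  up_an_bot hx hbx hz]
            · rw [up_an_bot hy hby hz,
                up_an_bot (hcl' x y hx hy) (hUnb2 x y hx hy hby) hz]
              by_cases hbx : e ≤ x
              · rw [up_bn hσe hbx hbot]
              · rw [up_an_bot hx hbx hbot]
        · by_cases hz : σ ≤ z
          · by_cases hbx : e ≤ x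
            · by_cases hbz : e ≤ z
              · rw [up_bn hσe hbx hy, up_nb hσe hy hbz, up_bn hσe hbx hy]
              · rw [up_bn hσe hbx hy, up_na_bot hσe hy hz hbz, up_bn hσe hbx hbot]
            · by_cases hbz : e ≤ z
              · rw [up_an_bot hx hbx hy, up_nb hσe hy hbz, up_an_bot hx hbx hy,
                  up_nb hσe hbot hbz]
              · rw [up_an_bot hx hbx hy, up_na_bot hσe hy hz hbz,
                  up_na_bot hσe hbot hz hbz, up_an_bot hx hbx hbot]
          · have hw : ¬ σ ≤ Up Ustar σ e p y z := up_not_a hσ0 hσe hy hz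
            by_cases hbx : e ≤ x
            · rw [up_bn hσe hbx hy, up_bn hσe hbx hw]
            · rw [up_an_bot hx hbx hy, up_an_bot hx hbx hw, hbl z hz]
      · by_cases hy : σ ≤ y
        · by_cases hz : σ ≤ z
          · rw [up_ss hy hz]
            by_cases hby : e ≤ y
            · rw [up_nb hσe hx hby]
              by_cases hbz : e ≤ z
              · rw [up_nb hσe hx hbz, up_nb hσe hx (hUb y z hy hz hby hbz)]
              · rw [up_na_bot hσe hx hz hbz,
                  up_na_bot hσe hx (hcl' y z hy hz) (hUnb2 y z hy hz hbz)]
            · rw [up_na_bot hσe hx hy hby,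
                up_na_bot hσe hx (hcl' y z hy hz) (hUnb1 y z hy hz hby)]
              by_cases hbz : e ≤ z
              · rw [up_nb hσe hbot hbz]
              · rw [up_na_bot hσe hbot hz hbz]
          · by_cases hby : e ≤ y
            · rw [up_nb hσe hx hby, up_bn hσe hby hz]
            · rw [up_na_bot hσe hx hy hby, up_an_bot hy hby hz, hbl z hz, hbr x hx]
        · by_cases hz : σ ≤ z
          · have hw : ¬ σ ≤ Up Ustar σ e p x y := up_not_a hσ0 hσe hx hy
            by_cases hbz : e ≤ z
            · rw [up_nb hσe hw hbz, up_nb hσe hy hbz]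
            · rw [up_na_bot hσe hw hz hbz, up_na_bot hσe hy hz hbz, hbr x hx]
          · rcases up_nn hσe hσp hmeet hmp hx hy with h | ⟨hxy, hdx1, hdx2, hxp, h⟩
            · rcases up_nn hσe hσp hmeet hmp hy hz with h' | ⟨hyz, _, _, _, h'⟩
              · rw [h, h', hbl z hz, hbr x hx]
              · rw [h, h', h, hbl z hz]
            · rcases up_nn hσe hσp hmeet hmp hy hz with h' | ⟨hyz, _, _, _, h'⟩
              · subst hxy
                rw [h, h', hbr x hx]
              · subst hxy
                subst hyz
                rw [h]
    exact ⟨Set.mem_univ e, fun x _ y _ => Set.mem_univ _, fun x _ y _ => comm x y,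
      fun x _ y _ z _ => assoc x y z,
      fun x _ y _ z _ hxy =>
        ⟨mono x y z hxy, by rw [comm z x, comm z y]; exact mono x y z hxy⟩,
      fun x _ => neut x⟩
end

section
/- Let L be a bounded lattice, σ ∈ L∖{0,1}, U* a uninorm on [σ,1] with neutral element e, and p ∈ I_σ^e. Assume that x ∧ p = 0 for all x ∈ I_{e,σ} with x ∥ p, and that U* ∈ U_t. Then the function U_p given by formula (2) is a uninorm on L with neutral element e if and only if x ∥ y for all x ∈ I_{e,σ} with x ∦ p and all y ∈ I_e^σ. -/
attribute [local instance] Classical.propDecidable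

variable {L : Type*}

theorem statement6 [Lattice L] [BoundedOrder L]
    (σ e p : L) (Ustar : L → L → L)
    (hσ0 : σ ≠ ⊥) (hσ1 : σ ≠ ⊤)
    (hU : IsUninormOn Ustar {x : L | σ ≤ x} e)
    (hp : Incomp p σ ∧ ¬ Incomp p e)
    (hmp : ∀ x : L, Incomp x e → Incomp x σ → Incomp x p → x ⊓ p = ⊥)
    (ht : ∀ x : L, σ ≤ x → ∀ y : L, σ ≤ y → e ≤ Ustar x y → e ≤ x ∧ e ≤ y) :
    IsUninormOn (Up Ustar σ e p) Set.univ e ↔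
      ∀ x y : L, Incomp x e → Incomp x σ → ¬ Incomp x p →
        Incomp y e → ¬ Incomp y σ → Incomp x y := by
  obtain ⟨heS, hclos, hcomm, hassoc, hmono, hneut⟩ := hU
  have heS' : σ ≤ e := heS
  have hpσ : Incomp p σ := hp.1
  have hpe : p ≤ e := by
    by_contra h
    exact hp.2 ⟨h, fun he => hpσ.2 (heS'.trans he)⟩
  have hbN : ¬ σ ≤ (⊥ : L) := fun h => hσ0 (le_bot_iff.1 h)
  -- computation lemmas
  have upSS : ∀ x y : L, σ ≤ x → σ ≤ y → Up Ustar σ e p x y = Ustar x y := by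
    intro x y hx hy
    unfold Up
    rw [if_pos ⟨hx, hy⟩]
  have upNE : ∀ x y : L, ¬ σ ≤ x → e ≤ y → Up Ustar σ e p x y = x := by
    intro x y hx hy
    unfold Up
    rw [if_neg (fun h => hx h.1), if_pos ⟨hx, hy⟩]
  have upEN : ∀ x y : L, e ≤ x → ¬ σ ≤ y → Up Ustar σ e p x y = y := by
    intro x y hx hy
    unfold Up
    rw [if_neg (fun h => hy h.2), if_neg (fun h => h.1 (heS'.trans hx)),
      if_pos ⟨hx, hy⟩]
  have upFN : ∀ x y : L, σ ≤ x → ¬ e ≤ x → ¬ σ ≤ y → Up Ustar σ e p x y = ⊥ := by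
    intro x y hx hex hy
    unfold Up
    rw [if_neg (fun h => hy h.2), if_neg (fun h => h.1 hx),
      if_neg (fun h => hex h.1), if_neg (fun h => h.1.2.2 hx)]
  have upNF : ∀ x y : L, ¬ σ ≤ x → σ ≤ y → ¬ e ≤ y → Up Ustar σ e p x y = ⊥ := by
    intro x y hx hy hey
    unfold Up
    rw [if_neg (fun h => hx h.1), if_neg (fun h => hey h.2),
      if_neg (fun h => hx (heS'.trans h.1)), if_neg (fun h => h.2.2.2 hy)]
  have upII : ∀ x y : L, Incomp x e → Incomp x σ → Incomp y e → Incomp y σ →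
      Up Ustar σ e p x y = x ⊓ y ⊓ p := by
    intro x y hxe hxσ hye hyσ
    unfold Up
    rw [if_neg (fun h => hxσ.2 h.1), if_neg (fun h => hye.2 h.2),
      if_neg (fun h => hxe.2 h.1), if_pos ⟨⟨hxe, hxσ⟩, ⟨hye, hyσ⟩⟩]
  have upND : ∀ x y : L, ¬ σ ≤ x → ¬ σ ≤ y →
      ¬ ((Incomp x e ∧ Incomp x σ) ∧ (Incomp y e ∧ Incomp y σ)) →
      Up Ustar σ e p x y = ⊥ := by
    intro x y hx hy hI
    unfold Up
    rw [if_neg (fun h => hx h.1), if_neg (fun h => hy (heS'.trans h.2)),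
      if_neg (fun h => hx (heS'.trans h.1)), if_neg hI]
  -- "D"-region lemmas
  have upD : ∀ w z : L, ¬ σ ≤ w → w ≤ e →
      Up Ustar σ e p w z = if e ≤ z then w else ⊥ := by
    intro w z hw hwe
    by_cases hz : e ≤ z
    · rw [if_pos hz]; exact upNE w z hw hz
    · rw [if_neg hz]
      by_cases hz2 : σ ≤ z
      · exact upNF w z hw hz2 hz
      · exact upND w z hw hz2 (fun h => h.1.1.1 hwe)
  have upD' : ∀ z w : L, ¬ σ ≤ w → w ≤ e →
      Up Ustar σ e p z w = if e ≤ z then w else ⊥ := by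
    intro z w hw hwe
    by_cases hz : e ≤ z
    · rw [if_pos hz]; exact upEN z w hz hw
    · rw [if_neg hz]
      by_cases hz2 : σ ≤ z
      · exact upFN z w hz2 hz hw
      · exact upND z w hz2 hw (fun h => h.2.1.1 hwe)
  have upb1 : ∀ w : L, Up Ustar σ e p ⊥ w = ⊥ := by
    intro w; rw [upD ⊥ w hbN bot_le]; split <;> rfl
  have upb2 : ∀ w : L, Up Ustar σ e p w ⊥ = ⊥ := by
    intro w; rw [upD' w ⊥ hbN bot_le]; split <;> rfl
  have hUclos : ∀ x y : L, σ ≤ x → σ ≤ y → σ ≤ Ustar x y := fun x y hx hy =>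
    hclos x hx y hy
  have hUE : ∀ x y : L, σ ≤ x → σ ≤ y → (e ≤ Ustar x y ↔ e ≤ x ∧ e ≤ y) := by
    intro x y hx hy
    constructor
    · exact ht x hx y hy
    · rintro ⟨hex, hey⟩
      have h1 : Ustar e y ≤ Ustar x y := (hmono e heS' x hx y hy hex).1
      rw [(hneut y hy).1] at h1
      exact hey.trans h1
  have hNNle : ∀ x y : L, ¬ σ ≤ x → ¬ σ ≤ y →
      ¬ σ ≤ Up Ustar σ e p x y ∧ Up Ustar σ e p x y ≤ e := by
    intro x y hx hy
    by_cases hI : (Incomp x e ∧ Incomp x σ) ∧ (Incomp y e ∧ Incomp y σ)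
    · rw [upII x y hI.1.1 hI.1.2 hI.2.1 hI.2.2]
      refine ⟨fun h => hpσ.2 (h.trans inf_le_right), ?_⟩
      exact inf_le_right.trans hpe
    · rw [upND x y hx hy hI]
      exact ⟨hbN, bot_le⟩
  -- commutativity
  have hc : ∀ x y : L, Up Ustar σ e p x y = Up Ustar σ e p y x := by
    intro x y
    by_cases hx : σ ≤ x <;> by_cases hy : σ ≤ y
    · rw [upSS x y hx hy, upSS y x hy hx]; exact hcomm x hx y hy
    · by_cases hex : e ≤ x
      · rw [upEN x y hex hy, upNE y x hy hex]
      · rw [upFN x y hx hex hy, upNF y x hy hx hex]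
    · by_cases hey : e ≤ y
      · rw [upNE x y hx hey, upEN y x hey hx]
      · rw [upNF x y hx hy hey, upFN y x hy hey hx]
    · by_cases hI : (Incomp x e ∧ Incomp x σ) ∧ (Incomp y e ∧ Incomp y σ)
      · rw [upII x y hI.1.1 hI.1.2 hI.2.1 hI.2.2,
          upII y x hI.2.1 hI.2.2 hI.1.1 hI.1.2]
        rw [inf_comm x y]
      · rw [upND x y hx hy hI, upND y x hy hx (fun h => hI ⟨h.2, h.1⟩)]
  -- main monotonicity in the first coordinate, assuming the RHS condition
  constructor
  · -- forward direction
    intro hUni x y hxe hxσ hxp hye hyσ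
    have hσy : σ ≤ y := by
      by_contra h
      exact hyσ ⟨fun h2 => hye.1 (h2.trans heS'), h⟩
    have hpx : p ≤ x := by
      by_contra h
      exact hxp ⟨fun h2 => hxe.1 (h2.trans hpe), h⟩
    refine ⟨?_, fun h => hxσ.2 (hσy.trans h)⟩
    intro hxy
    have hm := (hUni.2.2.2.2.1 x (Set.mem_univ x) y (Set.mem_univ y) x
      (Set.mem_univ x) hxy).1
    rw [upII x x hxe hxσ hxe hxσ, upFN y x hσy hye.2 hxσ.2] at hm
    have hpb : p ≤ (⊥ : L) := le_trans (le_inf (le_inf hpx hpx) le_rfl) hm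
    exact hpσ.1 (hpb.trans bot_le)
  · intro H
    have m1 : ∀ x y z : L, x ≤ y → Up Ustar σ e p x z ≤ Up Ustar σ e p y z := by
      intro x y z hxy
      by_cases hz : σ ≤ z
      · by_cases hx : σ ≤ x
        · have hy : σ ≤ y := hx.trans hxy
          rw [upSS x z hx hz, upSS y z hy hz]
          exact (hmono x hx y hy z hz hxy).1
        · by_cases hze : e ≤ z
          · rw [upNE x z hx hze]
            by_cases hy : σ ≤ y
            · rw [upSS y z hy hz]
              have h1 : Ustar y e ≤ Ustar y z := (hmono e heS' z hz y hy hze).2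
              rw [(hneut y hy).2] at h1
              exact hxy.trans h1
            · rw [upNE y z hy hze]; exact hxy
          · rw [upNF x z hx hz hze]; exact bot_le
      · by_cases hx : σ ≤ x
        · by_cases hxe : e ≤ x
          · have hye : e ≤ y := hxe.trans hxy
            rw [upEN x z hxe hz, upEN y z hye hz]
          · rw [upFN x z hx hxe hz]; exact bot_le
        · by_cases hI : (Incomp x e ∧ Incomp x σ) ∧ (Incomp z e ∧ Incomp z σ)
          · rw [upII x z hI.1.1 hI.1.2 hI.2.1 hI.2.2]
            by_cases hy : σ ≤ y
            · by_cases hye : e ≤ y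
              · rw [upEN y z hye hz]
                exact inf_le_left.trans inf_le_right
              · rw [upFN y z hy hye hz]
                -- need x ⊓ z ⊓ p = ⊥
                by_cases hpx : p ≤ x
                · exact absurd hxy (H x y hI.1.1 hI.1.2 (fun h => h.2 hpx)
                    ⟨fun h => hI.1.1.1 (hxy.trans h), hye⟩ (fun h => h.2 hy)).1
                · have hxp : Incomp x p := ⟨fun h2 => hI.1.1.1 (h2.trans hpe), hpx⟩
                  have hb : x ⊓ p = ⊥ := hmp x hI.1.1 hI.1.2 hxp
                  exact (inf_le_inf_right p inf_le_left).trans hb.le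
            · -- y ∈ N: show y ∈ I
              have hyI : Incomp y e ∧ Incomp y σ := by
                have h1 : ¬ y ≤ e := fun h => hI.1.1.1 (hxy.trans h)
                exact ⟨⟨h1, fun h => hy (heS'.trans h)⟩,
                  ⟨fun h => h1 (h.trans heS'), hy⟩⟩
              rw [upII y z hyI.1 hyI.2 hI.2.1 hI.2.2]
              exact inf_le_inf_right p (inf_le_inf_right z hxy)
          · rw [upND x z hx hz hI]; exact bot_le
    refine ⟨Set.mem_univ e, fun _ _ _ _ => Set.mem_univ _, ?_, ?_, ?_, ?_⟩
    · intro x _ y _; exact hc x y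
    · -- associativity
      intro x _ y _ z _
      by_cases hx : σ ≤ x <;> by_cases hy : σ ≤ y <;> by_cases hz : σ ≤ z
      · rw [upSS x y hx hy, upSS y z hy hz,
          upSS (Ustar x y) z (hUclos x y hx hy) hz,
          upSS x (Ustar y z) hx (hUclos y z hy hz)]
        exact hassoc x hx y hy z hz
      · -- x,y ∈ S, z ∈ N
        rw [upSS x y hx hy]
        by_cases hexy : e ≤ x ∧ e ≤ y
        · rw [upEN (Ustar x y) z ((hUE x y hx hy).2 hexy) hz,
            upEN y z hexy.2 hz, upEN x z hexy.1 hz]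
        · rw [upFN (Ustar x y) z (hUclos x y hx hy)
            (fun h => hexy ((hUE x y hx hy).1 h)) hz]
          by_cases hey : e ≤ y
          · have hex : ¬ e ≤ x := fun h => hexy ⟨h, hey⟩
            rw [upEN y z hey hz, upFN x z hx hex hz]
          · rw [upFN y z hy hey hz, upb2]
      · -- x,z ∈ S, y ∈ N
        by_cases hex : e ≤ x
        · rw [upEN x y hex hy]
          by_cases hez : e ≤ z
          · rw [upNE y z hy hez, upEN x y hex hy]
          · rw [upNF y z hy hz hez, upb2]
        · rw [upFN x y hx hex hy, upb1]
          by_cases hez : e ≤ z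
          · rw [upNE y z hy hez, upFN x y hx hex hy]
          · rw [upNF y z hy hz hez, upb2]
      · -- x ∈ S, y,z ∈ N
        have hD := hNNle y z hy hz
        rw [upD' x (Up Ustar σ e p y z) hD.1 hD.2]
        by_cases hex : e ≤ x
        · rw [upEN x y hex hy, if_pos hex]
        · rw [upFN x y hx hex hy, upb1, if_neg hex]
      · -- x ∈ N, y,z ∈ S
        by_cases hey : e ≤ y
        · rw [upNE x y hx hey]
          by_cases hez : e ≤ z
          · rw [upNE x z hx hez, upSS y z hy hz,
              upNE x (Ustar y z) hx ((hUE y z hy hz).2 ⟨hey, hez⟩)]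
          · rw [upNF x z hx hz hez, upSS y z hy hz,
              upNF x (Ustar y z) hx (hUclos y z hy hz)
                (fun h => hez ((hUE y z hy hz).1 h).2)]
        · rw [upNF x y hx hy hey, upb1, upSS y z hy hz,
            upNF x (Ustar y z) hx (hUclos y z hy hz)
              (fun h => hey ((hUE y z hy hz).1 h).1)]
      · -- x,z ∈ N, y ∈ S
        by_cases hey : e ≤ y
        · rw [upNE x y hx hey, upEN y z hey hz]
        · rw [upNF x y hx hy hey, upb1, upFN y z hy hey hz, upb2]
      · -- x,y ∈ N, z ∈ S
        have hD := hNNle x y hx hy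
        rw [upD (Up Ustar σ e p x y) z hD.1 hD.2]
        by_cases hez : e ≤ z
        · rw [upNE y z hy hez, if_pos hez]
        · rw [upNF y z hy hz hez, upb2, if_neg hez]
      · -- all in N
        have h1 := hNNle x y hx hy
        have h2 := hNNle y z hy hz
        rw [upD (Up Ustar σ e p x y) z h1.1 h1.2,
          upD' x (Up Ustar σ e p y z) h2.1 h2.2,
          if_neg (fun h => hz (heS'.trans h)),
          if_neg (fun h => hx (heS'.trans h))]
    · -- monotonicity
      intro x _ y _ z _ hxy
      refine ⟨m1 x y z hxy, ?_⟩
      rw [hc z x, hc z y]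
      exact m1 x y z hxy
    · -- neutrality
      intro x _
      constructor
      · by_cases hx : σ ≤ x
        · rw [upSS e x heS' hx]; exact (hneut x hx).1
        · rw [upEN e x le_rfl hx]
      · by_cases hx : σ ≤ x
        · rw [upSS x e hx heS']; exact (hneut x hx).2
        · rw [upNE x e hx le_rfl]
end

section
/- Let L be a bounded lattice, ϱ ∈ L∖{0,1}, U* a uninorm on [0,ϱ] with neutral element e, and q ∈ (0,e) ∪ I_e^ϱ. Assume that x ∨ y = 1 for all x, y ∈ I_{e,ϱ} with x ≠ y, that x ∨ q = 1 for all x ∈ I_{e,ϱ} with x ∥ q, that U* ∈ U_b, and that x ∥ y for all x ∈ I_{e,ϱ} with x ∦ q and all y ∈ I_e^ϱ (so that the function U_q given by formula (1) is a uninorm on L with neutral element e). Then for all x, y ∈ L, U_q(x,y) ≤ e implies x ≤ e and y ≤ e. -/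
attribute [local instance] Classical.propDecidable

variable {L : Type*}

theorem statement8 [Lattice L] [BoundedOrder L]
    (ϱ e q : L) (Ustar : L → L → L)
    (hϱ0 : ϱ ≠ ⊥) (hϱ1 : ϱ ≠ ⊤)
    (hU : IsUninormOn Ustar {x : L | x ≤ ϱ} e)
    (hq : (⊥ < q ∧ q < e) ∨ (Incomp q e ∧ ¬ Incomp q ϱ))
    (hjoin : ∀ x y : L, Incomp x e → Incomp x ϱ → Incomp y e → Incomp y ϱ →
      x ≠ y → x ⊔ y = ⊤)
    (hjq : ∀ x : L, Incomp x e → Incomp x ϱ → Incomp x q → x ⊔ q = ⊤)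
    (hb : ∀ x ≤ ϱ, ∀ y ≤ ϱ, Ustar x y ≤ e → x ≤ e ∧ y ≤ e)
    (hpar : ∀ x y : L, Incomp x e → Incomp x ϱ → ¬ Incomp x q →
      Incomp y e → ¬ Incomp y ϱ → Incomp x y) :
    ∀ x y : L, Uq Ustar ϱ e q x y ≤ e → x ≤ e ∧ y ≤ e := by
  have he : e ≤ ϱ := hU.1
  intro x y h
  unfold Uq at h
  split_ifs at h with h1 h2 h3 h4
  · exact hb x h1.1 y h1.2 h
  · exact absurd (h.trans he) h2.1
  · exact absurd (h.trans he) h3.2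
  · exact absurd ((le_sup_left.trans le_sup_left).trans h) h4.1.1.1
  · exact absurd (top_unique (h.trans he)) hϱ1
end

section
/- Let L be a bounded lattice, ϱ ∈ L∖{0,1}, U* a uninorm on [0,ϱ] with neutral element e, and q ∈ I_ϱ^e. Assume that x ∨ q = 1 for all x ∈ I_{e,ϱ} with x ∥ q, that U* ∈ U_b, and that x ∥ y for all x ∈ I_{e,ϱ} with x ∦ q and all y ∈ I_e^ϱ (so that the function U_q given by formula (1) is a uninorm on L with neutral element e). Then for all x, y ∈ L, U_q(x,y) ≤ e implies x ≤ e and y ≤ e. -/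
attribute [local instance] Classical.propDecidable

variable {L : Type*}

theorem statement10 [Lattice L] [BoundedOrder L]
    (ϱ e q : L) (Ustar : L → L → L)
    (hϱ0 : ϱ ≠ ⊥) (hϱ1 : ϱ ≠ ⊤)
    (hU : IsUninormOn Ustar {x : L | x ≤ ϱ} e)
    (hq : Incomp q ϱ ∧ ¬ Incomp q e)
    (hjq : ∀ x : L, Incomp x e → Incomp x ϱ → Incomp x q → x ⊔ q = ⊤)
    (hb : ∀ x ≤ ϱ, ∀ y ≤ ϱ, Ustar x y ≤ e → x ≤ e ∧ y ≤ e)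
    (hpar : ∀ x y : L, Incomp x e → Incomp x ϱ → ¬ Incomp x q →
      Incomp y e → ¬ Incomp y ϱ → Incomp x y) :
    ∀ x y : L, Uq Ustar ϱ e q x y ≤ e → x ≤ e ∧ y ≤ e := by
  have heϱ : e ≤ ϱ := hU.1
  intro x y h
  unfold Uq at h
  split_ifs at h with h1 h2 h3 h4
  · exact hb x h1.1 y h1.2 h
  · exact absurd (h.trans heϱ) h2.1
  · exact absurd (h.trans heϱ) h3.2
  · exact absurd ((le_sup_right.trans h).trans heϱ) hq.1.1
  · exact absurd (top_le_iff.mp (h.trans heϱ)) hϱ1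
end

section
/- Let L be a bounded lattice, σ ∈ L∖{0,1}, U* a uninorm on [σ,1] with neutral element e, and p ∈ (e,1) ∪ I_e^σ. Assume that x ∧ y = 0 for all x, y ∈ I_{e,σ} with x ≠ y, that x ∧ p = 0 for all x ∈ I_{e,σ} with x ∥ p, that U* ∈ U_t, and that x ∥ y for all x ∈ I_{e,σ} with x ∦ p and all y ∈ I_e^σ (so that the function U_p given by formula (2) is a uninorm on L with neutral element e). Then for all x, y ∈ L, e ≤ U_p(x,y) implies e ≤ x and e ≤ y. -/
attribute [local instance] Classical.propDecidable

variable {L : Type*}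

theorem statement12 [Lattice L] [BoundedOrder L]
    (σ e p : L) (Ustar : L → L → L)
    (hσ0 : σ ≠ ⊥) (hσ1 : σ ≠ ⊤)
    (hU : IsUninormOn Ustar {x : L | σ ≤ x} e)
    (hp : (e < p ∧ p < ⊤) ∨ (Incomp p e ∧ ¬ Incomp p σ))
    (hmeet : ∀ x y : L, Incomp x e → Incomp x σ → Incomp y e → Incomp y σ →
      x ≠ y → x ⊓ y = ⊥)
    (hmp : ∀ x : L, Incomp x e → Incomp x σ → Incomp x p → x ⊓ p = ⊥)
    (ht : ∀ x : L, σ ≤ x → ∀ y : L, σ ≤ y → e ≤ Ustar x y → e ≤ x ∧ e ≤ y)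
    (hpar : ∀ x y : L, Incomp x e → Incomp x σ → ¬ Incomp x p →
      Incomp y e → ¬ Incomp y σ → Incomp x y) :
    ∀ x y : L, e ≤ Up Ustar σ e p x y → e ≤ x ∧ e ≤ y := by
  intro x y h
  unfold Up at h
  split_ifs at h with h1 h2 h3 h4
  · exact ht x h1.1 y h1.2 h
  · exact ⟨h, h2.2⟩
  · exact ⟨h3.1, h⟩
  · exact absurd (h.trans ((inf_le_left.trans inf_le_left))) h4.1.1.2
  · exact absurd (le_bot_iff.mp h ▸ hU.1 : σ ≤ (⊥:L)) (fun hc => hσ0 (le_bot_iff.mp hc))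
end

section
/- Let L be a bounded lattice, σ ∈ L∖{0,1}, U* a uninorm on [σ,1] with neutral element e, and p ∈ I_σ^e. Assume that x ∧ p = 0 for all x ∈ I_{e,σ} with x ∥ p, that U* ∈ U_t, and that x ∥ y for all x ∈ I_{e,σ} with x ∦ p and all y ∈ I_e^σ (so that the function U_p given by formula (2) is a uninorm on L with neutral element e). Then for all x, y ∈ L, e ≤ U_p(x,y) implies e ≤ x and e ≤ y. -/
attribute [local instance] Classical.propDecidable

variable {L : Type*}

theorem statement14 [Lattice L] [BoundedOrder L]
    (σ e p : L) (Ustar : L → L → L)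
    (hσ0 : σ ≠ ⊥) (hσ1 : σ ≠ ⊤)
    (hU : IsUninormOn Ustar {x : L | σ ≤ x} e)
    (hp : Incomp p σ ∧ ¬ Incomp p e)
    (hmp : ∀ x : L, Incomp x e → Incomp x σ → Incomp x p → x ⊓ p = ⊥)
    (ht : ∀ x : L, σ ≤ x → ∀ y : L, σ ≤ y → e ≤ Ustar x y → e ≤ x ∧ e ≤ y)
    (hpar : ∀ x y : L, Incomp x e → Incomp x σ → ¬ Incomp x p →
      Incomp y e → ¬ Incomp y σ → Incomp x y) :
    ∀ x y : L, e ≤ Up Ustar σ e p x y → e ≤ x ∧ e ≤ y := by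
  intro x y h
  unfold Up at h
  split_ifs at h with h1 h2 h3 h4
  · exact ht x h1.1 y h1.2 h
  · exact ⟨h, h2.2⟩
  · exact ⟨h3.1, h⟩
  · exact absurd (le_trans h (le_trans inf_le_left inf_le_left)) h4.1.1.2
  · exact ⟨le_trans (le_bot_iff.mp h).le bot_le, le_trans (le_bot_iff.mp h).le bot_le⟩
end

section
/- Let L be a bounded lattice and ϱ ∈ L∖{0,1}. If V is a t-norm on the interval [ϱ,1], then the function T : L² → L defined by T(x,y) = V(x,y) if (x,y) ∈ [ϱ,1]², T(x,y) = x ∧ y if 1 ∈ {x,y}, and T(x,y) = 0 otherwise, is a t-norm on L. -/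
attribute [local instance] Classical.propDecidable

variable {L : Type*}

noncomputable def TT [Lattice L] [BoundedOrder L] (ϱ : L) (V : L → L → L) (x y : L) : L :=
  if ϱ ≤ x ∧ ϱ ≤ y then V x y else if x = ⊤ ∨ y = ⊤ then x ⊓ y else ⊥

theorem statement16 [Lattice L] [BoundedOrder L]
    (ϱ : L) (hϱ0 : ϱ ≠ ⊥) (hϱ1 : ϱ ≠ ⊤)
    (V : L → L → L)
    (hV : IsUninormOn V {x : L | ϱ ≤ x} ⊤) :
    IsUninormOn
      (fun x y : L =>
        if ϱ ≤ x ∧ ϱ ≤ y then V x y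
        else if x = ⊤ ∨ y = ⊤ then x ⊓ y
        else ⊥)
      Set.univ ⊤ := by
  show IsUninormOn (TT ϱ V) Set.univ ⊤
  obtain ⟨he, hmap, hcomm, hassoc, hmono, hneut⟩ := hV
  have hmap' : ∀ x y, ϱ ≤ x → ϱ ≤ y → ϱ ≤ V x y := fun x y hx hy => hmap x hx y hy
  have hρb : ¬ ϱ ≤ (⊥ : L) := fun h => hϱ0 (le_bot_iff.mp h)
  have hbt : (⊥ : L) ≠ ⊤ := fun h => hρb (h ▸ le_top)
  have hVx : ∀ x y, ϱ ≤ x → ϱ ≤ y → V x y ≤ x := by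
    intro x y hx hy
    have := (hmono y hy ⊤ le_top x hx le_top).2
    rwa [(hneut x hx).2] at this
  have hVt : ∀ x y, ϱ ≤ x → ϱ ≤ y → x ≠ ⊤ → V x y ≠ ⊤ := by
    intro x y hx hy hxt h
    exact hxt (top_le_iff.mp (h ▸ hVx x y hx hy))
  -- basic computation lemmas for TT
  have TP : ∀ x y, ϱ ≤ x → ϱ ≤ y → TT ϱ V x y = V x y := by
    intro x y hx hy; unfold TT; rw [if_pos ⟨hx, hy⟩]
  have Ttop : ∀ y, TT ϱ V ⊤ y = y := by
    intro y; unfold TT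
    by_cases hy : ϱ ≤ y
    · rw [if_pos ⟨le_top, hy⟩]; exact (hneut y hy).1
    · rw [if_neg (fun h => hy h.2), if_pos (Or.inl rfl)]; exact top_inf_eq y
  have Ttop' : ∀ y, TT ϱ V y ⊤ = y := by
    intro y; unfold TT
    by_cases hy : ϱ ≤ y
    · rw [if_pos ⟨hy, le_top⟩]; exact (hneut y hy).2
    · rw [if_neg (fun h => hy h.1), if_pos (Or.inr rfl)]; exact inf_top_eq y
  have Tnp : ∀ x y, x ≠ ⊤ → y ≠ ⊤ → ¬(ϱ ≤ x ∧ ϱ ≤ y) → TT ϱ V x y = ⊥ := by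
    intro x y hx hy h; unfold TT
    rw [if_neg h, if_neg (by rintro (h | h) <;> [exact hx h; exact hy h])]
  have Tne : ∀ x y, x ≠ ⊤ → y ≠ ⊤ → TT ϱ V x y ≠ ⊤ := by
    intro x y hx hy
    by_cases h : ϱ ≤ x ∧ ϱ ≤ y
    · rw [TP x y h.1 h.2]; exact hVt x y h.1 h.2 hx
    · rw [Tnp x y hx hy h]; exact hbt
  have Tcomm : ∀ x y, TT ϱ V x y = TT ϱ V y x := by
    intro x y; unfold TT
    by_cases h : ϱ ≤ x ∧ ϱ ≤ y
    · rw [if_pos h, if_pos ⟨h.2, h.1⟩, hcomm x h.1 y h.2]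
    · rw [if_neg h, if_neg (show ¬(ϱ ≤ y ∧ ϱ ≤ x) from fun h' => h ⟨h'.2, h'.1⟩)]
      by_cases h2 : x = ⊤ ∨ y = ⊤
      · rw [if_pos h2, if_pos (Or.symm h2), inf_comm]
      · rw [if_neg h2, if_neg (show ¬(y = ⊤ ∨ x = ⊤) from fun h' => h2 (Or.symm h'))]
  refine ⟨Set.mem_univ _, fun _ _ _ _ => Set.mem_univ _, fun x _ y _ => Tcomm x y, ?_, ?_,
    fun x _ => ⟨Ttop x, Ttop' x⟩⟩
  · -- associativity
    intro x _ y _ z _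
    by_cases hx : x = ⊤
    · subst hx; rw [Ttop, Ttop]
    by_cases hy : y = ⊤
    · subst hy; rw [Ttop' x, Ttop z]
    by_cases hz : z = ⊤
    · subst hz; rw [Ttop', Ttop' y]
    by_cases hpx : ϱ ≤ x
    · by_cases hpy : ϱ ≤ y
      · by_cases hpz : ϱ ≤ z
        · rw [TP x y hpx hpy, TP y z hpy hpz, TP (V x y) z (hmap' x y hpx hpy) hpz,
            TP x (V y z) hpx (hmap' y z hpy hpz)]
          exact hassoc x hpx y hpy z hpz
        · -- ¬ ϱ ≤ z : both sides ⊥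
          rw [TP x y hpx hpy, Tnp (V x y) z (hVt x y hpx hpy hx) hz (fun h => hpz h.2),
            Tnp y z hy hz (fun h => hpz h.2), Tnp x ⊥ hx hbt (fun h => hρb h.2)]
      · -- ¬ ϱ ≤ y
        rw [Tnp x y hx hy (fun h => hpy h.2), Tnp y z hy hz (fun h => hpy h.1),
          Tnp ⊥ z hbt hz (fun h => hρb h.1), Tnp x ⊥ hx hbt (fun h => hρb h.2)]
    · -- ¬ ϱ ≤ x
      rw [Tnp x y hx hy (fun h => hpx h.1), Tnp ⊥ z hbt hz (fun h => hρb h.1),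
        Tnp x (TT ϱ V y z) hx (Tne y z hy hz) (fun h => hpx h.1)]
  · -- monotonicity
    intro x _ y _ z _ hxy
    have main : ∀ a b c : L, a ≤ b → TT ϱ V a c ≤ TT ϱ V b c := by
      intro a b c hab
      by_cases hac : ϱ ≤ a ∧ ϱ ≤ c
      · rw [TP a c hac.1 hac.2, TP b c (hac.1.trans hab) hac.2]
        exact (hmono a hac.1 b (hac.1.trans hab) c hac.2 hab).1
      · by_cases hat : a = ⊤
        · have hbt' : b = ⊤ := top_le_iff.mp (hat ▸ hab)
          subst hat; subst hbt'; exact le_refl _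
        by_cases hct : c = ⊤
        · subst hct; rw [Ttop', Ttop']; exact hab
        · rw [Tnp a c hat hct hac]; exact bot_le
    exact ⟨main x y z hxy, by rw [Tcomm z x, Tcomm z y]; exact main x y z hxy⟩
end

section
/- Let L be a bounded lattice and ϱ ∈ L∖{0,1}. If W is a t-conorm on the interval [0,ϱ], then the function S : L² → L defined by S(x,y) = W(x,y) if (x,y) ∈ [0,ϱ]², S(x,y) = x ∨ y if 0 ∈ {x,y}, and S(x,y) = 1 otherwise, is a t-conorm on L. -/
attribute [local instance] Classical.propDecidable

variable {L : Type*}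

theorem statement17 [Lattice L] [BoundedOrder L]
    (ϱ : L) (hϱ0 : ϱ ≠ ⊥) (hϱ1 : ϱ ≠ ⊤)
    (W : L → L → L)
    (hW : IsUninormOn W {x : L | x ≤ ϱ} ⊥) :
    IsUninormOn
      (fun x y : L =>
        if x ≤ ϱ ∧ y ≤ ϱ then W x y
        else if x = ⊥ ∨ y = ⊥ then x ⊔ y
        else ⊤)
      Set.univ ⊥ := by
  obtain ⟨-, hc, hcm, ha, hm, hn⟩ := hW
  set S : L → L → L := fun x y =>
    if x ≤ ϱ ∧ y ≤ ϱ then W x y else if x = ⊥ ∨ y = ⊥ then x ⊔ y else ⊤ with hSdef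
  have hS : ∀ a b : L, S a b = if a ≤ ϱ ∧ b ≤ ϱ then W a b
      else if a = ⊥ ∨ b = ⊥ then a ⊔ b else ⊤ := fun a b => by simp only [hSdef]
  have hne : (⊥ : L) ≠ ⊤ := fun h => hϱ0 (le_bot_iff.mp (by rw [h]; exact le_top))
  have htop : ¬ (⊤ : L) ≤ ϱ := fun h => hϱ1 (top_unique h)
  have hxle : ∀ a b : L, a ≤ ϱ → b ≤ ϱ → a ≤ W a b ∧ b ≤ W a b := by
    intro a b hab hb
    constructor
    · calc a = W a ⊥ := ((hn a hab).2).symm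
        _ ≤ W a b := (hm ⊥ bot_le b hb a hab bot_le).2
    · calc b = W ⊥ b := ((hn b hb).1).symm
        _ ≤ W a b := (hm ⊥ bot_le a hab b hb bot_le).1
  have hWbot : ∀ a b : L, a ≤ ϱ → b ≤ ϱ → W a b = ⊥ → a = ⊥ ∧ b = ⊥ := by
    intro a b hab hb h
    obtain ⟨h1, h2⟩ := hxle a b hab hb
    exact ⟨le_bot_iff.mp (h ▸ h1), le_bot_iff.mp (h ▸ h2)⟩
  have hS2 : ∀ a b : L, a ≤ ϱ → b ≤ ϱ → S a b = W a b := by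
    intro a b hab hb; rw [hS a b, if_pos ⟨hab, hb⟩]
  have hSbotl : ∀ b : L, S ⊥ b = b := by
    intro b
    by_cases hb : b ≤ ϱ
    · rw [hS2 ⊥ b bot_le hb, (hn b hb).1]
    · rw [hS ⊥ b, if_neg (fun h => hb h.2), if_pos (Or.inl rfl), bot_sup_eq]
  have hSbotr : ∀ b : L, S b ⊥ = b := by
    intro b
    by_cases hb : b ≤ ϱ
    · rw [hS2 b ⊥ hb bot_le, (hn b hb).2]
    · rw [hS b ⊥, if_neg (fun h => hb h.1), if_pos (Or.inr rfl), sup_bot_eq]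
  have hS3 : ∀ a b : L, a ≠ ⊥ → b ≠ ⊥ → ¬(a ≤ ϱ ∧ b ≤ ϱ) → S a b = ⊤ := by
    intro a b hab hb h
    rw [hS a b, if_neg h, if_neg (by rintro (h' | h') <;> [exact hab h'; exact hb h'])]
  have hStopl : ∀ b : L, S ⊤ b = ⊤ := by
    intro b
    by_cases hb : b = ⊥
    · rw [hb, hSbotr]
    · rw [hS3 ⊤ b (fun h => hne h.symm) hb (fun h => htop h.1)]
  have hStopr : ∀ b : L, S b ⊤ = ⊤ := by
    intro b
    by_cases hb : b = ⊥
    · rw [hb, hSbotl]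
    · rw [hS3 b ⊤ hb (fun h => hne h.symm) (fun h => htop h.2)]
  have hScomm : ∀ a b : L, S a b = S b a := by
    intro a b
    by_cases h : a ≤ ϱ ∧ b ≤ ϱ
    · rw [hS2 a b h.1 h.2, hS2 b a h.2 h.1, hcm a h.1 b h.2]
    · rw [hS a b, hS b a, if_neg h,
        if_neg (show ¬(b ≤ ϱ ∧ a ≤ ϱ) from fun h' => h ⟨h'.2, h'.1⟩)]
      by_cases hb : a = ⊥ ∨ b = ⊥
      · rw [if_pos hb, if_pos hb.symm, sup_comm]
      · rw [if_neg hb, if_neg (show ¬(b = ⊥ ∨ a = ⊥) from fun h' => hb h'.symm)]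
  have hmono1 : ∀ x y z : L, x ≤ y → S x z ≤ S y z := by
    intro x y z hxy
    by_cases pz : z ≤ ϱ
    · by_cases py : y ≤ ϱ
      · have px : x ≤ ϱ := hxy.trans py
        rw [hS2 x z px pz, hS2 y z py pz]
        exact (hm x px y py z pz hxy).1
      · have hy : y ≠ ⊥ := fun h => py (h ▸ bot_le)
        by_cases hz : z = ⊥
        · rw [hz, hSbotr, hSbotr]; exact hxy
        · rw [hS3 y z hy hz (fun h => py h.1)]; exact le_top
    · have hz : z ≠ ⊥ := fun h => pz (h ▸ bot_le)
      by_cases hx : x = ⊥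
      · rw [hx, hSbotl]
        by_cases hy : y = ⊥
        · rw [hy, hSbotl]
        · rw [hS3 y z hy hz (fun h => pz h.2)]; exact le_top
      · have hy : y ≠ ⊥ := fun h => hx (le_bot_iff.mp (h ▸ hxy))
        rw [hS3 y z hy hz (fun h => pz h.2)]; exact le_top
  refine ⟨Set.mem_univ _, fun _ _ _ _ => Set.mem_univ _, fun x _ y _ => hScomm x y,
    ?_, fun x _ y _ z _ h => ⟨hmono1 x y z h, by
      rw [hScomm z x, hScomm z y]; exact hmono1 x y z h⟩,
    fun x _ => ⟨hSbotl x, hSbotr x⟩⟩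
  intro x _ y _ z _
  by_cases hx : x = ⊥
  · rw [hx, hSbotl, hSbotl]
  by_cases hz : z = ⊥
  · rw [hz, hSbotr, hSbotr]
  by_cases hy : y = ⊥
  · rw [hy, hSbotr, hSbotl]
  by_cases hall : x ≤ ϱ ∧ y ≤ ϱ ∧ z ≤ ϱ
  · obtain ⟨px, py, pz⟩ := hall
    rw [hS2 x y px py, hS2 y z py pz, hS2 _ z (hc x px y py) pz,
      hS2 x _ px (hc y py z pz), ha x px y py z pz]
  · have lhs : S (S x y) z = ⊤ := by
      by_cases hxy : x ≤ ϱ ∧ y ≤ ϱ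
      · rw [hS2 x y hxy.1 hxy.2]
        have hW' : W x y ≠ ⊥ := fun h => hy (hWbot x y hxy.1 hxy.2 h).2
        have hpz : ¬ z ≤ ϱ := fun h => hall ⟨hxy.1, hxy.2, h⟩
        exact hS3 _ z hW' hz (fun h => hpz h.2)
      · rw [hS3 x y hx hy hxy, hStopl]
    have rhs : S x (S y z) = ⊤ := by
      by_cases hyz : y ≤ ϱ ∧ z ≤ ϱ
      · rw [hS2 y z hyz.1 hyz.2]
        have hW' : W y z ≠ ⊥ := fun h => hy (hWbot y z hyz.1 hyz.2 h).1
        have hpx : ¬ x ≤ ϱ := fun h => hall ⟨h, hyz.1, hyz.2⟩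
        exact hS3 x _ hx hW' (fun h => hpx h.1)
      · rw [hS3 y z hy hz hyz, hStopr]
    rw [lhs, rhs]
end
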